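/- arXiv:2309.06493 — 6 statements merged into one kernel-verified Lean document; each statement's English description precedes it below -/
import Mathlib

section
/- Let φ : ℝ → ℝ be concave and C², let f : V → ℝ, and let x ∈ V. Assume φ'''(s) ≥ 0 (in the sense that φ'' is monotone nondecreasing) for all s with min_{y∼x} f(y) < s < f(x). Then Δ(φ∘f)(x) ≤ φ'(f(x))·Δf(x) + (P₀/2)·φ''(f(x))·(∇₋f(x))², where ∇₋f(x) = max_{y∼x} (f(y)−f(x))₋/d(x,y) and P₀ = inf_{x∼y} P(x,y)·d(x,y)². -/
open Finset Real

/-- Markov chain Laplacian `Δf(x) = ∑_y P(x,y)(f(y)-f(x))`. -/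
noncomputable def lap {V : Type*} [Fintype V] (P : V → V → ℝ) (f : V → ℝ) (x : V) : ℝ :=
  ∑ y, P x y * (f y - f x)

/-- 1-Lipschitz functions with respect to the distance `d`. -/
def Lip1 {V : Type*} (d : V → V → ℝ) (f : V → ℝ) : Prop :=
  ∀ u v, |f u - f v| ≤ d u v

/-- `P₀ = inf_{x∼y} P(x,y) d(x,y)²`, the infimum over edges. -/
noncomputable def P0 {V : Type*} (P d : V → V → ℝ) : ℝ :=
  sInf {c | ∃ x y, x ≠ y ∧ 0 < P x y ∧ c = P x y * d x y ^ 2}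

/-- Non-negative Ollivier curvature: for every edge `x∼y`,
`κ(x,y) = inf{(Δf(x)-Δf(y))/d(x,y) : f ∈ Lip(1), f(y)-f(x)=d(x,y)} ≥ 0`. -/
def NonnegOllivier {V : Type*} [Fintype V] (P d : V → V → ℝ) : Prop :=
  ∀ x y, 0 < P x y → x ≠ y → ∀ f : V → ℝ, Lip1 d f → f y - f x = d x y →
    lap P f y ≤ lap P f x

/-- `d` is a path metric adapted to the Markov kernel `P`: a metric, positive on distinct
points, and every distance is realized by the length of a path along edges of `P`. -/
def IsPathDist {V : Type*} (P d : V → V → ℝ) : Prop :=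
  (∀ x, d x x = 0) ∧ (∀ x y, d x y = d y x) ∧ (∀ x y z, d x z ≤ d x y + d y z) ∧
  (∀ x y, x ≠ y → 0 < d x y) ∧
  (∀ x y : V, ∃ (n : ℕ) (c : ℕ → V), c 0 = x ∧ c n = y ∧
    (∀ i < n, 0 < P (c i) (c (i + 1))) ∧
    (∑ i ∈ Finset.range n, d (c i) (c (i + 1))) = d x y)

/-- Measure of a set of vertices. -/
noncomputable def measSet {V : Type*} [Fintype V] (m : V → ℝ) (A : Set V) : ℝ :=
  ∑ x, A.indicator m x

/-- Boundary measure `|∂W| = ∑_{x∈W, y∉W} m(x) P(x,y) d(x,y)`. -/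
noncomputable def bdry {V : Type*} [Fintype V] (P d : V → V → ℝ) (m : V → ℝ)
    (W : Set V) : ℝ :=
  ∑ x, ∑ y, W.indicator (fun _ => (1 : ℝ)) x * (Wᶜ).indicator (fun _ => (1 : ℝ)) y *
    (m x * P x y * d x y)

/-- Distance between two sets of vertices. -/
noncomputable def setDist {V : Type*} (d : V → V → ℝ) (A B : Set V) : ℝ :=
  sInf {c | ∃ a ∈ A, ∃ b ∈ B, c = d a b}

/-- Closure of a set: the set together with its outer vertex boundary. -/
def clSet {V : Type*} (P : V → V → ℝ) (B : Set V) : Set V :=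
  B ∪ {x | ∃ b ∈ B, 0 < P x b}

/-- Observable diameter at level `ε`. -/
noncomputable def diamObs {V : Type*} [Fintype V] (P d : V → V → ℝ) (m : V → ℝ)
    (ε : ℝ) : ℝ :=
  sSup {c | ∃ A B : Set V, ε ≤ measSet m A ∧ ε ≤ measSet m (clSet P B) ∧ c = setDist d A B}

/-- Diameter of a set of vertices (with respect to the global distance). -/
noncomputable def diamSet {V : Type*} (d : V → V → ℝ) (S : Set V) : ℝ :=
  sSup {c | ∃ x ∈ S, ∃ y ∈ S, c = d x y}

open Classical in
/-- Negative gradient `∇₋f(x) = max_{y∼x} (f(x)-f(y))₊ / d(x,y)`. -/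
noncomputable def nablaMinus {V : Type*} [Fintype V] (P d : V → V → ℝ) (f : V → ℝ)
    (x : V) : ℝ :=
  ⨆ y : V, if 0 < P x y ∧ x ≠ y then max (f x - f y) 0 / d x y else 0

/-- Logarithmic mean. -/
noncomputable def logMean (s t : ℝ) : ℝ :=
  if s = t then s else (s - t) / (Real.log s - Real.log t)

/-- Smallest Dirichlet eigenvalue of `-Δ` on `W` (zero boundary conditions on `Wᶜ`). -/
noncomputable def lamD {V : Type*} [Fintype V] (P : V → V → ℝ) (m : V → ℝ)
    (W : Set V) : ℝ :=
  sInf {e | ∃ g : V → ℝ, (∑ x, g x ^ 2 * m x) = 1 ∧ (∀ x ∉ W, g x = 0) ∧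
    e = ∑ x, (-(lap P g x)) * g x * m x}

/-!
Write `Δ(φ ∘ f)(x)` as the sum of the edge terms `P(x,y) (φ(f y) - φ(f x))`. On an edge with
`f y ≥ f x`, concavity bounds the term by the tangent term `φ'(f x) P(x,y) (f y - f x)`. On an edge
with `f y < f x`, monotonicity of `φ''` on `(f y, f x)` yields the second-order bound with the extra
term `φ''(f x) P(x,y) (f x - f y)² / 2 ≤ 0`. All extra terms are nonpositive, so they may be dropped
except the one at an edge realising `∇₋f(x)`, where `P(x,y) (f x - f y)² = P(x,y) d(x,y)² ∇₋f(x)²`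
is at least `P₀ ∇₋f(x)²`.
-/

open Set

section Calculus

variable {φ φ' φ'' : ℝ → ℝ}

theorem ConcaveOn.le_add_deriv_mul_sub (hconc : ConcaveOn ℝ univ φ)
    (hφ : ∀ s, HasDerivAt φ (φ' s) s) (s t : ℝ) : φ t ≤ φ s + φ' s * (t - s) := by
  rcases lt_trichotomy t s with hts | rfl | hst
  · have := hconc.le_slope_of_hasDerivAt (mem_univ t) (mem_univ s) hts (hφ s)
    rw [slope_def_field, le_div_iff₀ (sub_pos.2 hts)] at this
    linarith
  · simp
  · have := hconc.slope_le_of_hasDerivAt (mem_univ s) (mem_univ t) hst (hφ s)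
    rw [slope_def_field, div_le_iff₀ (sub_pos.2 hst)] at this
    linarith

theorem ConcaveOn.second_deriv_nonpos (hconc : ConcaveOn ℝ univ φ)
    (hφ : ∀ s, HasDerivAt φ (φ' s) s) (hφ' : ∀ s, HasDerivAt φ' (φ'' s) s) (s : ℝ) :
    φ'' s ≤ 0 := by
  have hderiv : deriv φ = φ' := funext fun u ↦ (hφ u).deriv
  refine (hφ' s).nonpos_of_antitone fun a b hab ↦ ?_
  simpa [hderiv] using
    hconc.antitoneOn_deriv (fun u _ ↦ (hφ u).differentiableAt) (mem_univ a) (mem_univ b) hab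

/-- Since `φ''` is nondecreasing, `φ'` is convex on `[t, s]` and so lies above its tangent line
at `s`; integrating that tangent bound from `t` to `s` gives the estimate. -/
theorem le_taylor_two_of_monotoneOn (hφ : ∀ s, HasDerivAt φ (φ' s) s)
    (hφ' : ∀ s, HasDerivAt φ' (φ'' s) s) {t s : ℝ} (hts : t ≤ s)
    (hmono : MonotoneOn φ'' (Ioo t s)) :
    φ t ≤ φ s + φ' s * (t - s) + φ'' s * (t - s) ^ 2 / 2 := by
  have hconv : ConvexOn ℝ (Icc t s) φ' := by
    have hderiv : deriv φ' = φ'' := funext fun u ↦ (hφ' u).deriv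
    refine MonotoneOn.convexOn_of_deriv (convex_Icc t s)
      (fun u _ ↦ (hφ' u).continuousAt.continuousWithinAt)
      (fun u _ ↦ (hφ' u).differentiableAt.differentiableWithinAt) ?_
    rwa [interior_Icc, hderiv]
  have htangent : ∀ u ∈ Icc t s, φ' s + φ'' s * (u - s) ≤ φ' u := by
    intro u hu
    rcases hu.2.eq_or_lt with rfl | hus
    · simp
    have := hconv.slope_le_of_hasDerivAt hu (right_mem_Icc.2 hts) hus (hφ' s)
    rw [slope_def_field, div_le_iff₀ (sub_pos.2 hus)] at this
    linarith
  set g : ℝ → ℝ := fun u ↦ φ u - φ' s * (u - s) - φ'' s * (u - s) ^ 2 / 2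
  have hg : ∀ u, HasDerivAt g (φ' u - φ' s - φ'' s * (u - s)) u := by
    intro u
    have hlin : HasDerivAt (fun u : ℝ ↦ u - s) 1 u := (hasDerivAt_id u).sub_const s
    have hsq : HasDerivAt (fun u : ℝ ↦ (u - s) ^ 2) (2 * (u - s)) u := by
      simpa using hlin.fun_pow 2
    exact (((hφ u).sub (hlin.const_mul (φ' s))).sub
      ((hsq.const_mul (φ'' s)).div_const 2)).congr_deriv (by ring)
  have hg_mono : MonotoneOn g (Icc t s) := by
    refine monotoneOn_of_hasDerivWithinAt_nonneg (convex_Icc t s)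
      (fun u _ ↦ (hg u).continuousAt.continuousWithinAt) (fun u _ ↦ (hg u).hasDerivWithinAt) ?_
    rw [interior_Icc]
    intro u hu
    linarith [htangent u (Ioo_subset_Icc_self hu)]
  have := hg_mono (left_mem_Icc.2 hts) (right_mem_Icc.2 hts) hts
  simp only [g, sub_self] at this
  linarith

theorem ConcaveOn.le_add_deriv_mul_sub_add_sq (hconc : ConcaveOn ℝ univ φ)
    (hφ : ∀ s, HasDerivAt φ (φ' s) s) (hφ' : ∀ s, HasDerivAt φ' (φ'' s) s) {a b : ℝ}
    (hmono : MonotoneOn φ'' (Ioo b a)) :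
    φ b ≤ φ a + φ' a * (b - a) + φ'' a * max (a - b) 0 ^ 2 / 2 := by
  rcases le_total b a with hba | hab
  · rw [max_eq_left (sub_nonneg.2 hba), ← neg_sub b a, neg_sq]
    exact le_taylor_two_of_monotoneOn hφ hφ' hba hmono
  · rw [max_eq_right (sub_nonpos.2 hab)]
    simpa using hconc.le_add_deriv_mul_sub hφ a b

end Calculus

section MarkovChain

variable {V : Type*} (P d : V → V → ℝ) (f : V → ℝ) (x : V)

open Classical in
noncomputable def negSlope (y : V) : ℝ :=
  if 0 < P x y ∧ x ≠ y then max (f x - f y) 0 / d x y else 0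

theorem dist_mul_negSlope {y : V} (hxy : 0 < P x y) (hne : x ≠ y) (hd : d x y ≠ 0) :
    d x y * negSlope P d f x y = max (f x - f y) 0 := by
  simp only [negSlope, if_pos (And.intro hxy hne)]
  field_simp

theorem P0_mul_negSlope_sq_le (y : V) :
    P0 P d * negSlope P d f x y ^ 2 ≤ P x y * d x y ^ 2 * negSlope P d f x y ^ 2 := by
  by_cases hy : 0 < P x y ∧ x ≠ y
  · refine mul_le_mul_of_nonneg_right (csInf_le ⟨0, ?_⟩ ⟨x, y, hy.2, hy.1, rfl⟩) (sq_nonneg _)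
    rintro _ ⟨a, b, -, hPab, rfl⟩
    positivity
  · simp [negSlope, hy]

variable [Fintype V]

theorem nablaMinus_eq_iSup_negSlope : nablaMinus P d f x = ⨆ y, negSlope P d f x y := rfl

theorem P0_mul_nablaMinus_sq_le (hP : ∀ y, 0 ≤ P x y) :
    P0 P d * nablaMinus P d f x ^ 2 ≤ ∑ y, P x y * d x y ^ 2 * negSlope P d f x y ^ 2 := by
  have : Nonempty V := ⟨x⟩
  obtain ⟨y, hy⟩ := exists_eq_ciSup_of_finite (f := negSlope P d f x)
  rw [nablaMinus_eq_iSup_negSlope, ← hy]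
  calc P0 P d * negSlope P d f x y ^ 2
      ≤ P x y * d x y ^ 2 * negSlope P d f x y ^ 2 := P0_mul_negSlope_sq_le P d f x y
    _ ≤ ∑ z, P x z * d x z ^ 2 * negSlope P d f x z ^ 2 := by
        apply Finset.single_le_sum _ (Finset.mem_univ y)
        intro z _
        have := hP z
        positivity

variable {φ φ' φ'' : ℝ → ℝ}

theorem lap_comp_le (hP : ∀ y, 0 ≤ P x y) (hd : ∀ y, x ≠ y → d x y ≠ 0)
    (hconc : ConcaveOn ℝ univ φ) (hφ : ∀ s, HasDerivAt φ (φ' s) s)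
    (hφ' : ∀ s, HasDerivAt φ' (φ'' s) s)
    (hmono : MonotoneOn φ'' {s | (∃ y, (0 < P x y ∧ x ≠ y) ∧ f y < s) ∧ s < f x}) :
    lap P (fun z ↦ φ (f z)) x ≤ φ' (f x) * lap P f x +
      φ'' (f x) / 2 * ∑ y, P x y * d x y ^ 2 * negSlope P d f x y ^ 2 := by
  rw [lap, lap, Finset.mul_sum, Finset.mul_sum, ← Finset.sum_add_distrib]
  refine Finset.sum_le_sum fun y _ ↦ ?_
  by_cases hy : 0 < P x y ∧ x ≠ y
  · have hsq : d x y ^ 2 * negSlope P d f x y ^ 2 = max (f x - f y) 0 ^ 2 := by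
      rw [← mul_pow, dist_mul_negSlope P d f x hy.1 hy.2 (hd y hy.2)]
    have hmono' : MonotoneOn φ'' (Ioo (f y) (f x)) :=
      hmono.mono fun s hs ↦ ⟨⟨y, hy, hs.1⟩, hs.2⟩
    have := mul_le_mul_of_nonneg_left
      (hconc.le_add_deriv_mul_sub_add_sq hφ hφ' hmono') (hP y)
    rw [mul_assoc (P x y), hsq]
    linarith
  · rcases not_and_or.1 hy with hPxy | hxy
    · simp [le_antisymm (not_lt.1 hPxy) (hP y)]
    · obtain rfl := not_not.1 hxy
      simp [negSlope]

end MarkovChain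

theorem local_chain_rule_general {V : Type*} [Fintype V] (P d : V → V → ℝ)
    (hP : ∀ x y, 0 ≤ P x y)
    (hd : IsPathDist P d)
    (φ φ' φ'' : ℝ → ℝ)
    (hconc : ConcaveOn ℝ Set.univ φ)
    (hder1 : ∀ s, HasDerivAt φ (φ' s) s)
    (hder2 : ∀ s, HasDerivAt φ' (φ'' s) s)
    (f : V → ℝ) (x : V)
    (hmono : MonotoneOn φ'' {s | (∃ y, (0 < P x y ∧ x ≠ y) ∧ f y < s) ∧ s < f x}) :
    lap P (fun z => φ (f z)) x ≤
      φ' (f x) * lap P f x + P0 P d / 2 * φ'' (f x) * (nablaMinus P d f x) ^ 2 := by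
  have hlap := lap_comp_le P d f x (hP x) (fun y hy ↦ (hd.2.2.2.1 x y hy).ne')
    hconc hder1 hder2 hmono
  have hP0 := P0_mul_nablaMinus_sq_le P d f x (hP x)
  have hφ'' : φ'' (f x) / 2 ≤ 0 := by
    linarith [hconc.second_deriv_nonpos hder1 hder2 (f x)]
  calc _ ≤ φ' (f x) * lap P f x + φ'' (f x) / 2 * ∑ y, P x y * d x y ^ 2 * negSlope P d f x y ^ 2 :=
        hlap
    _ ≤ φ' (f x) * lap P f x + φ'' (f x) / 2 * (P0 P d * nablaMinus P d f x ^ 2) := by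
        linarith [mul_le_mul_of_nonpos_left hP0 hφ'']
    _ = φ' (f x) * lap P f x + P0 P d / 2 * φ'' (f x) * nablaMinus P d f x ^ 2 := by ring

/-- Chain rule estimate: if `φ` is concave and `φ''` is nondecreasing on the relevant
interval, then `Δ(φ∘f)(x) ≤ φ'(f(x)) Δf(x) + (P₀/2) φ''(f(x)) (∇₋f(x))²`. -/
theorem local_chain_rule {V : Type*} [Fintype V] (P d : V → V → ℝ)
    (hP : ∀ x y, 0 ≤ P x y) (hsupp : ∀ x y, 0 < P x y ↔ 0 < P y x)
    (hd : IsPathDist P d)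
    (φ φ' φ'' : ℝ → ℝ)
    (hconc : ConcaveOn ℝ Set.univ φ)
    (hder1 : ∀ s, HasDerivAt φ (φ' s) s)
    (hder2 : ∀ s, HasDerivAt φ' (φ'' s) s)
    (f : V → ℝ) (x : V)
    (hmono : MonotoneOn φ'' {s | (∃ y, (0 < P x y ∧ x ≠ y) ∧ f y < s) ∧ s < f x}) :
    lap P (fun z => φ (f z)) x ≤
      φ' (f x) * lap P f x + P0 P d / 2 * φ'' (f x) * (nablaMinus P d f x) ^ 2 :=
  local_chain_rule_general P d hP hd φ φ' φ'' hconc hder1 hder2 f x hmono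
end

section
/- Let W ⊂ V and u : V → ℝ with Δu ≤ C on W and ∇₋u ≥ 1 on W, where C > 0. Set β = 2C/P₀ and fix R > 0. Define φ on [0,R] by φ(s) = (1 − e^{−βs} − βs·e^{−βR})/(β(1 − e^{−βR})), extended linearly to the left of 0 with slope 1 and constantly to the right of R. Then φ is increasing, concave, with 0 ≤ φ' ≤ 1, and for every x ∈ W with 0 ≤ u(y) for all y ∼ x and u(x) ≤ R, one has Δ(φ∘u)(x) ≤ −C/(e^{βR} − 1). -/
open Finset Real

noncomputable def phiAux (β R : ℝ) : ℝ → ℝ := fun s =>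
  if s < 0 then s
  else if s ≤ R then
    (1 - Real.exp (-β * s) - β * s * Real.exp (-β * R)) / (β * (1 - Real.exp (-β * R)))
  else
    (1 - Real.exp (-β * R) - β * R * Real.exp (-β * R)) / (β * (1 - Real.exp (-β * R)))

noncomputable def Lslope (β R : ℝ) : ℝ → ℝ := fun a =>
  if a < 0 then 1
  else if a ≤ R then (Real.exp (-β * a) - Real.exp (-β * R)) / (1 - Real.exp (-β * R))
  else 0

lemma hE1 {β R : ℝ} (hβ : 0 < β) (hR : 0 < R) : Real.exp (-β * R) < 1 := by
  rw [Real.exp_lt_one_iff]; nlinarith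

lemma phiAux_nonpos {β R : ℝ} (hR : 0 < R) {s : ℝ} (hs : s ≤ 0) : phiAux β R s = s := by
  rcases lt_or_eq_of_le hs with h | h
  · simp [phiAux, h]
  · subst h; simp [phiAux, hR.le]

lemma phiAux_mid {β R : ℝ} {s : ℝ} (h0 : 0 ≤ s) (h1 : s ≤ R) :
    phiAux β R s =
      (1 - Real.exp (-β * s) - β * s * Real.exp (-β * R)) / (β * (1 - Real.exp (-β * R))) := by
  simp [phiAux, not_lt.2 h0, h1]

lemma phiAux_ge {β R : ℝ} (hR : 0 < R) {s : ℝ} (h : R ≤ s) :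
    phiAux β R s =
      (1 - Real.exp (-β * R) - β * R * Real.exp (-β * R)) / (β * (1 - Real.exp (-β * R))) := by
  rcases eq_or_lt_of_le h with h' | h'
  · subst h'; simp [phiAux, not_lt.2 hR.le]
  · simp [phiAux, not_lt.2 (hR.trans h').le, not_le.2 h']

lemma lip_mid {β R : ℝ} (hβ : 0 < β) (hR : 0 < R) {s t : ℝ}
    (h0 : 0 ≤ s) (hst : s ≤ t) (h1 : t ≤ R) :
    0 ≤ phiAux β R t - phiAux β R s ∧ phiAux β R t - phiAux β R s ≤ t - s := by
  have hE := hE1 hβ hR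
  have hE0 : 0 < Real.exp (-β * R) := Real.exp_pos _
  have hD : 0 < β * (1 - Real.exp (-β * R)) := by nlinarith
  rw [phiAux_mid h0 (hst.trans h1), phiAux_mid (h0.trans hst) h1, div_sub_div_same]
  have hTpos : 0 < Real.exp (-β * t) := Real.exp_pos _
  have key : Real.exp (-β * s) = Real.exp (-β * t) * Real.exp (β * (t - s)) := by
    rw [← Real.exp_add]; ring_nf
  have h1' : β * (t - s) + 1 ≤ Real.exp (β * (t - s)) := Real.add_one_le_exp _
  have hER : Real.exp (-β * t) ≥ Real.exp (-β * R) := Real.exp_le_exp.2 (by nlinarith)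
  have p1 : Real.exp (-β * t) * (β * (t - s) + 1) ≤ Real.exp (-β * t) * Real.exp (β * (t - s)) :=
    mul_le_mul_of_nonneg_left h1' hTpos.le
  have p2 : Real.exp (-β * R) * (β * (t - s)) ≤ Real.exp (-β * t) * (β * (t - s)) :=
    mul_le_mul_of_nonneg_right hER (by nlinarith)
  constructor
  · apply div_nonneg _ hD.le
    nlinarith [p1, p2, key]
  · rw [div_le_iff₀ hD]
    have hthis : Real.exp (-β * s) - Real.exp (-β * t) ≤ β * (t - s) := by
      have hS1 : Real.exp (-β * s) ≤ 1 := by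
        rw [← Real.exp_zero]; exact Real.exp_le_exp.2 (by nlinarith)
      have h2 : 1 - Real.exp (-(β * (t - s))) ≤ β * (t - s) := by
        have := Real.add_one_le_exp (-(β * (t - s)))
        nlinarith
      have hEy1 : Real.exp (-(β * (t - s))) ≤ 1 := by
        rw [← Real.exp_zero]; exact Real.exp_le_exp.2 (by nlinarith)
      have key2 : Real.exp (-β * t) = Real.exp (-β * s) * Real.exp (-(β * (t - s))) := by
        rw [← Real.exp_add]; ring_nf
      have p3 : Real.exp (-β * s) * (1 - Real.exp (-(β * (t - s)))) ≤
          1 * (1 - Real.exp (-(β * (t - s)))) :=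
        mul_le_mul_of_nonneg_right hS1 (by linarith)
      nlinarith [p3, h2, key2]
    nlinarith

lemma phiAux_lip {β R : ℝ} (hβ : 0 < β) (hR : 0 < R) {s t : ℝ} (hst : s ≤ t) :
    0 ≤ phiAux β R t - phiAux β R s ∧ phiAux β R t - phiAux β R s ≤ t - s := by
  rcases le_or_gt t 0 with ht | ht
  · rw [phiAux_nonpos hR (hst.trans ht), phiAux_nonpos hR ht]
    exact ⟨by linarith, le_refl _⟩
  rcases le_or_gt s 0 with hs | hs
  · rw [phiAux_nonpos hR hs]
    rcases le_or_gt t R with htR | htR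
    · have h0 := lip_mid hβ hR (le_refl 0) ht.le htR
      rw [phiAux_nonpos hR (le_refl 0)] at h0
      constructor <;> nlinarith [h0.1, h0.2]
    · have h0 := lip_mid hβ hR (le_refl 0) hR.le (le_refl R)
      rw [phiAux_nonpos hR (le_refl 0)] at h0
      have hthis : phiAux β R t = phiAux β R R := by
        rw [phiAux_ge hR htR.le, phiAux_ge hR (le_refl R)]
      rw [hthis]
      constructor <;> nlinarith [h0.1, h0.2]
  rcases le_or_gt t R with htR | htR
  · exact lip_mid hβ hR hs.le hst htR
  rcases le_or_gt s R with hsR | hsR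
  · have h0 := lip_mid hβ hR hs.le hsR (le_refl R)
    have hthis : phiAux β R t = phiAux β R R := by
      rw [phiAux_ge hR htR.le, phiAux_ge hR (le_refl R)]
    rw [hthis]
    constructor <;> nlinarith [h0.1, h0.2]
  · have h1 : phiAux β R t = phiAux β R R := by
      rw [phiAux_ge hR htR.le, phiAux_ge hR (le_refl R)]
    have h2 : phiAux β R s = phiAux β R R := by
      rw [phiAux_ge hR hsR.le, phiAux_ge hR (le_refl R)]
    rw [h1, h2]
    exact ⟨by linarith, by linarith⟩

lemma Lslope_mem {β R : ℝ} (hβ : 0 < β) (hR : 0 < R) (a : ℝ) :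
    0 ≤ Lslope β R a ∧ Lslope β R a ≤ 1 := by
  have hE := hE1 hβ hR
  have hE0 : 0 < Real.exp (-β * R) := Real.exp_pos _
  unfold Lslope
  split_ifs with h1 h2
  · norm_num
  · have hA1 : Real.exp (-β * a) ≤ 1 := by
      rw [← Real.exp_zero]; exact Real.exp_le_exp.2 (by nlinarith [not_lt.1 h1])
    have hAE : Real.exp (-β * R) ≤ Real.exp (-β * a) := Real.exp_le_exp.2 (by nlinarith)
    constructor
    · apply div_nonneg (by linarith) (by linarith)
    · rw [div_le_one (by linarith)]; linarith
  · norm_num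

lemma divHelper {nt na X D : ℝ} (hD : 0 < D) (h : nt ≤ na + X * D) : nt / D ≤ na / D + X := by
  rw [div_add' _ _ _ hD.ne']
  exact (div_le_div_iff_of_pos_right hD).2 h

lemma tangent_mid {β R : ℝ} (hβ : 0 < β) (hR : 0 < R) {a t : ℝ}
    (ha0 : 0 ≤ a) (haR : a ≤ R) (ht0 : 0 ≤ t) (htR : t ≤ R) :
    phiAux β R t ≤ phiAux β R a + Lslope β R a * (t - a) := by
  have hE := hE1 hβ hR
  have hE0 : 0 < Real.exp (-β * R) := Real.exp_pos _
  have hD : 0 < β * (1 - Real.exp (-β * R)) := by nlinarith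
  have hL : Lslope β R a = (Real.exp (-β * a) - Real.exp (-β * R)) / (1 - Real.exp (-β * R)) := by
    simp [Lslope, not_lt.2 ha0, haR]
  have hkey : Real.exp (-β * a) * (1 + β * (a - t)) ≤ Real.exp (-β * t) := by
    have h1 : β * (a - t) + 1 ≤ Real.exp (β * (a - t)) := Real.add_one_le_exp _
    have h2 : Real.exp (-β * t) = Real.exp (-β * a) * Real.exp (β * (a - t)) := by
      rw [← Real.exp_add]; ring_nf
    nlinarith [mul_le_mul_of_nonneg_left h1 (Real.exp_pos (-β * a)).le]
  rw [phiAux_mid ht0 htR, phiAux_mid ha0 haR, hL]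
  have hne : (1 : ℝ) - Real.exp (-β * R) ≠ 0 := by linarith
  have hne' : (1 : ℝ) - Real.exp (-(β * R)) ≠ 0 := by rw [← neg_mul]; exact hne
  apply divHelper hD
  have hXD : (Real.exp (-β * a) - Real.exp (-β * R)) / (1 - Real.exp (-β * R)) * (t - a) *
      (β * (1 - Real.exp (-β * R))) = β * (Real.exp (-β * a) - Real.exp (-β * R)) * (t - a) := by
    field_simp [hne']
  rw [hXD]
  nlinarith [hkey]

lemma second_mid {β R : ℝ} (hβ : 0 < β) (hR : 0 < R) {a b : ℝ}
    (hb0 : 0 ≤ b) (hba : b ≤ a) (haR : a ≤ R) :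
    phiAux β R b ≤ phiAux β R a + Lslope β R a * (b - a)
      - β * Real.exp (-β * a) / (1 - Real.exp (-β * R)) * (b - a) ^ 2 / 2 := by
  have hE := hE1 hβ hR
  have hE0 : 0 < Real.exp (-β * R) := Real.exp_pos _
  have hD : 0 < β * (1 - Real.exp (-β * R)) := by nlinarith
  have ha0 : 0 ≤ a := hb0.trans hba
  have hL : Lslope β R a = (Real.exp (-β * a) - Real.exp (-β * R)) / (1 - Real.exp (-β * R)) := by
    simp [Lslope, not_lt.2 ha0, haR]
  have hkey : Real.exp (-β * a) * (1 + β * (a - b) + (β * (a - b)) ^ 2 / 2) ≤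
      Real.exp (-β * b) := by
    have h1 : 1 + β * (a - b) + (β * (a - b)) ^ 2 / 2 ≤ Real.exp (β * (a - b)) :=
      Real.quadratic_le_exp_of_nonneg (by nlinarith)
    have h2 : Real.exp (-β * b) = Real.exp (-β * a) * Real.exp (β * (a - b)) := by
      rw [← Real.exp_add]; ring_nf
    nlinarith [mul_le_mul_of_nonneg_left h1 (Real.exp_pos (-β * a)).le]
  rw [phiAux_mid hb0 (hba.trans haR), phiAux_mid ha0 haR, hL]
  have hne : (1 : ℝ) - Real.exp (-β * R) ≠ 0 := by linarith
  have hβne : β ≠ 0 := hβ.ne'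
  have hne' : (1 : ℝ) - Real.exp (-(β * R)) ≠ 0 := by rw [← neg_mul]; exact hne
  have hassoc : ∀ u v w : ℝ, u + v - w = u + (v - w) := by intros; ring
  rw [hassoc]
  apply divHelper hD
  have hXD : ((Real.exp (-β * a) - Real.exp (-β * R)) / (1 - Real.exp (-β * R)) * (b - a)
      - β * Real.exp (-β * a) / (1 - Real.exp (-β * R)) * (b - a) ^ 2 / 2) *
      (β * (1 - Real.exp (-β * R))) = β * (Real.exp (-β * a) - Real.exp (-β * R)) * (b - a)
      - β ^ 2 * Real.exp (-β * a) * (b - a) ^ 2 / 2 := by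
    field_simp [hne']
  rw [hXD]
  nlinarith [hkey]

lemma tangent {β R : ℝ} (hβ : 0 < β) (hR : 0 < R) (a t : ℝ) :
    phiAux β R t ≤ phiAux β R a + Lslope β R a * (t - a) := by
  have hLm := Lslope_mem hβ hR a
  rcases lt_or_ge a 0 with ha | ha
  · have hL : Lslope β R a = 1 := by simp [Lslope, ha]
    have h1 : phiAux β R t ≤ t := by
      rcases le_or_gt t 0 with ht | ht
      · rw [phiAux_nonpos hR ht]
      · have := (phiAux_lip hβ hR ht.le).2
        rw [phiAux_nonpos hR (le_refl 0)] at this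
        linarith
    rw [hL, phiAux_nonpos hR ha.le]
    linarith
  rcases le_or_gt a R with haR | haR
  · rcases lt_or_ge t 0 with ht | ht
    · have h0 := tangent_mid hβ hR ha haR (le_refl 0) hR.le
      · rw [phiAux_nonpos hR (le_refl 0)] at h0
        rw [phiAux_nonpos hR ht.le]
        nlinarith [h0, hLm.1, hLm.2]
    · rcases le_or_gt t R with htR | htR
      · exact tangent_mid hβ hR ha haR ht htR
      · have h0 := tangent_mid hβ hR ha haR hR.le (le_refl R)
        rw [phiAux_ge hR htR.le, ← phiAux_ge hR (le_refl R)]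
        nlinarith [h0, hLm.1]
  · have hL : Lslope β R a = 0 := by simp [Lslope, not_lt.2 ha, not_le.2 haR]
    rw [hL]
    rcases le_or_gt t a with hta | hta
    · have := (phiAux_lip hβ hR hta).1
      linarith
    · have h1 : phiAux β R t = phiAux β R R := by
        rw [phiAux_ge hR (haR.trans hta).le, phiAux_ge hR (le_refl R)]
      have h2 : phiAux β R a = phiAux β R R := by
        rw [phiAux_ge hR haR.le, phiAux_ge hR (le_refl R)]
      rw [h1, h2]; linarith

open Classical in
lemma exists_grad_witness {V : Type*} [Fintype V] (P d : V → V → ℝ) (u : V → ℝ) (x : V)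
    (h : 1 ≤ nablaMinus P d u x) :
    ∃ y, 0 < P x y ∧ x ≠ y ∧ 1 ≤ max (u x - u y) 0 / d x y := by
  unfold nablaMinus at h
  have : Nonempty V := ⟨x⟩
  obtain ⟨y0, hy0⟩ := exists_eq_ciSup_of_finite
    (f := fun y : V => if 0 < P x y ∧ x ≠ y then max (u x - u y) 0 / d x y else 0)
  rw [← hy0] at h
  by_cases hc : 0 < P x y0 ∧ x ≠ y0
  · rw [if_pos hc] at h; exact ⟨y0, hc.1, hc.2, h⟩
  · rw [if_neg hc] at h; norm_num at h

/-- Global chain rule, case `C > 0`: the explicit concave function `φ` built from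
`φ(s) = (1 - e^{-βs} - βs e^{-βR})/(β(1-e^{-βR}))` on `[0,R]` (extended linearly with
slope 1 to the left, constantly to the right) is increasing and concave with slopes in
`[0,1]`, and `Δ(φ∘u)(x) ≤ -C/(e^{βR}-1)` at every `x ∈ W` whose neighbours satisfy
`u ≥ 0` and with `u(x) ≤ R`. -/
theorem global_chain_rule_pos {V : Type*} [Fintype V] (P d : V → V → ℝ)
    (hP : ∀ x y, 0 ≤ P x y) (hsupp : ∀ x y, 0 < P x y ↔ 0 < P y x)
    (hd : IsPathDist P d) (hP0 : 0 < P0 P d)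
    (W : Set V) (u : V → ℝ) (C R : ℝ) (hC : 0 < C) (hR : 0 < R)
    (hlap : ∀ x ∈ W, lap P u x ≤ C)
    (hgrad : ∀ x ∈ W, 1 ≤ nablaMinus P d u x) :
    let β := 2 * C / P0 P d
    let φ : ℝ → ℝ := fun s =>
      if s < 0 then s
      else if s ≤ R then
        (1 - Real.exp (-β * s) - β * s * Real.exp (-β * R)) / (β * (1 - Real.exp (-β * R)))
      else
        (1 - Real.exp (-β * R) - β * R * Real.exp (-β * R)) / (β * (1 - Real.exp (-β * R)))
    (∀ s t : ℝ, s ≤ t → 0 ≤ φ t - φ s ∧ φ t - φ s ≤ t - s) ∧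
    ConcaveOn ℝ Set.univ φ ∧
    (∀ x ∈ W, (∀ y, 0 < P x y → x ≠ y → 0 ≤ u y) → u x ≤ R →
      lap P (fun z => φ (u z)) x ≤ -C / (Real.exp (β * R) - 1)) := by
  intro β φ
  have hβ : 0 < β := div_pos (by linarith) hP0
  have hφ : φ = phiAux β R := rfl
  have hβval : β = 2 * C / P0 P d := rfl
  clear_value β φ
  have hE : Real.exp (-β * R) < 1 := hE1 hβ hR
  have hE0 : 0 < Real.exp (-β * R) := Real.exp_pos _
  have hne : (1 : ℝ) - Real.exp (-β * R) ≠ 0 := by linarith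
  refine ⟨?_, ?_, ?_⟩
  · intro s t hst
    rw [hφ]
    exact phiAux_lip hβ hR hst
  · constructor
    · exact convex_univ
    · intro p _ q _ lam mu hlam hmu hsum
      simp only [smul_eq_mul]
      rw [hφ]
      have h1 := tangent hβ hR (lam * p + mu * q) p
      have h2 := tangent hβ hR (lam * p + mu * q) q
      have e1 : lam * (phiAux β R (lam * p + mu * q)
            + Lslope β R (lam * p + mu * q) * (p - (lam * p + mu * q)))
          + mu * (phiAux β R (lam * p + mu * q)
            + Lslope β R (lam * p + mu * q) * (q - (lam * p + mu * q)))
          = phiAux β R (lam * p + mu * q) := by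
        have hmu' : mu = 1 - lam := by linarith
        subst hmu'
        ring
      have h1' := mul_le_mul_of_nonneg_left h1 hlam
      have h2' := mul_le_mul_of_nonneg_left h2 hmu
      linarith
  · intro x hx hnb hxR
    classical
    obtain ⟨y0, hPy0, hxy0, hval⟩ := exists_grad_witness P d u x (hgrad x hx)
    have hd0 : 0 < d x y0 := hd.2.2.2.1 x y0 hxy0
    have hmax : d x y0 ≤ max (u x - u y0) 0 := by
      rw [one_le_div hd0] at hval
      exact hval
    have hdiff : d x y0 ≤ u x - u y0 := by
      rcases le_or_gt (u x - u y0) 0 with h' | h'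
      · rw [max_eq_right h'] at hmax; linarith
      · rwa [max_eq_left h'.le] at hmax
    have hb0 : 0 ≤ u y0 := hnb y0 hPy0 hxy0
    have hba : u y0 ≤ u x := by linarith
    have ha0 : 0 ≤ u x := by linarith
    -- P0 ≤ P x y0 * d x y0 ^ 2
    have hbdd : BddBelow {c | ∃ x y, x ≠ y ∧ 0 < P x y ∧ c = P x y * d x y ^ 2} := by
      by_contra hb
      rw [P0, Real.sInf_of_not_bddBelow hb] at hP0
      exact lt_irrefl 0 hP0
    have hP0le : P0 P d ≤ P x y0 * d x y0 ^ 2 :=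
      csInf_le hbdd ⟨x, y0, hxy0, hPy0, rfl⟩
    have hP0le2 : P0 P d ≤ P x y0 * (u x - u y0) ^ 2 := by
      have : d x y0 ^ 2 ≤ (u x - u y0) ^ 2 := by nlinarith
      nlinarith [hP x y0]
    -- per-term bounds
    have htan : ∀ y, phiAux β R (u y) - phiAux β R (u x)
        ≤ Lslope β R (u x) * (u y - u x) := by
      intro y
      have := tangent hβ hR (u x) (u y)
      linarith
    have hsec := second_mid hβ hR hb0 hba hxR
    have hterm : ∀ y ∈ (univ : Finset V),
        P x y * (phiAux β R (u y) - phiAux β R (u x))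
        ≤ P x y * (Lslope β R (u x) * (u y - u x)) +
          (if y = y0 then
            -(β * Real.exp (-β * u x) / (1 - Real.exp (-β * R))) *
              (P x y0 * (u x - u y0) ^ 2) / 2 else 0) := by
      intro y _
      by_cases hy : y = y0
      · rw [hy, if_pos rfl]
        have h3 := mul_le_mul_of_nonneg_left hsec (hP x y0)
        nlinarith [h3]
      · rw [if_neg hy]
        have := mul_le_mul_of_nonneg_left (htan y) (hP x y)
        linarith
    have hsum := Finset.sum_le_sum hterm
    have hlapeq : lap P (fun z => φ (u z)) x
        = ∑ y, P x y * (phiAux β R (u y) - phiAux β R (u x)) := by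
      rw [hφ]; rfl
    rw [hlapeq]
    have hsplit : ∑ y, (P x y * (Lslope β R (u x) * (u y - u x)) +
          (if y = y0 then
            -(β * Real.exp (-β * u x) / (1 - Real.exp (-β * R))) *
              (P x y0 * (u x - u y0) ^ 2) / 2 else 0))
        = Lslope β R (u x) * lap P u x +
          -(β * Real.exp (-β * u x) / (1 - Real.exp (-β * R))) *
            (P x y0 * (u x - u y0) ^ 2) / 2 := by
      rw [Finset.sum_add_distrib, Finset.sum_ite_eq' univ y0, if_pos (mem_univ y0), lap,
        Finset.mul_sum]
      congr 1
      apply Finset.sum_congr rfl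
      intro y _
      ring
    rw [hsplit] at hsum
    have hLm := Lslope_mem hβ hR (u x)
    have hT1 : Lslope β R (u x) * lap P u x ≤ Lslope β R (u x) * C :=
      mul_le_mul_of_nonneg_left (hlap x hx) hLm.1
    have hApos : 0 < Real.exp (-β * u x) := Real.exp_pos _
    have hcoef : 0 < β * Real.exp (-β * u x) / (1 - Real.exp (-β * R)) := by
      apply div_pos (by positivity) (by linarith)
    have hT2 : -(β * Real.exp (-β * u x) / (1 - Real.exp (-β * R))) *
          (P x y0 * (u x - u y0) ^ 2) / 2
        ≤ -(β * Real.exp (-β * u x) / (1 - Real.exp (-β * R))) * P0 P d / 2 := by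
      nlinarith [hcoef, hP0le2]
    -- final computation
    have hL : Lslope β R (u x) = (Real.exp (-β * u x) - Real.exp (-β * R)) /
        (1 - Real.exp (-β * R)) := by
      simp [Lslope, not_lt.2 ha0, hxR]
    have hβP0 : β * P0 P d = 2 * C := by
      rw [hβval]
      field_simp
    have hEinv : Real.exp (β * R) = (Real.exp (-β * R))⁻¹ := by
      rw [← Real.exp_neg]; congr 1; ring
    have hden : 0 < Real.exp (β * R) - 1 := by
      have h1 : (1 : ℝ) < Real.exp (β * R) := by
        rw [← Real.exp_zero]
        exact Real.exp_lt_exp.2 (by positivity)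
      linarith
    have hfinal : Lslope β R (u x) * C +
        -(β * Real.exp (-β * u x) / (1 - Real.exp (-β * R))) * P0 P d / 2
        = -C / (Real.exp (β * R) - 1) := by
      rw [hL, hEinv]
      have hE'' : (Real.exp (-β * R))⁻¹ - 1 = (1 - Real.exp (-β * R)) / Real.exp (-β * R) := by
        field_simp
      rw [hE'', div_div_eq_mul_div]
      linear_combination (-(Real.exp (-β * u x) / (1 - Real.exp (-β * R)) / 2)) * hβP0
    linarith [hsum, hT1, hT2, hfinal.le]
end

section
/- Let φ(s) = (2Rs − s²)/(2R) on [0,R] for R > 0, extended linearly outside. If u : V → ℝ satisfies Δu ≤ C on W with C ≤ 0 and ∇₋u ≥ 1 on W, then for every x ∈ W with u(y) ≥ 0 for all y ∼ x and u(x) ≤ R, one has Δ(φ∘u)(x) ≤ C·φ'(u(x)) + (P₀/2)·φ''(u(x)) ≤ −P₀/(2R). -/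
open Finset Real

private lemma phi_tangent {R s t : ℝ} (hR : 0 < R) (hs0 : 0 ≤ s) (hsR : s ≤ R) (ht : 0 ≤ t) :
    (if t < 0 then t else if t ≤ R then (2 * R * t - t ^ 2) / (2 * R) else R / 2) -
      (if s < 0 then s else if s ≤ R then (2 * R * s - s ^ 2) / (2 * R) else R / 2)
      ≤ (R - s) / R * (t - s) := by
  have h2R : (0:ℝ) < 2 * R := by linarith
  rw [if_neg (not_lt.2 ht), if_neg (not_lt.2 hs0), if_pos hsR]
  split_ifs with htR
  · rw [div_sub_div_same, div_le_iff₀ h2R]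
    have hkey : (R - s) / R * (t - s) * (2 * R) = (R - s) * (t - s) * 2 := by
      field_simp
    rw [hkey]; nlinarith [sq_nonneg (t - s)]
  · push_neg at htR
    have h1 : R / 2 - (2 * R * s - s ^ 2) / (2 * R) = (R - s) ^ 2 / (2 * R) := by
      field_simp; ring
    have h2 : (R - s) / R * (t - s) = (R - s) * (t - s) * 2 / (2 * R) := by
      field_simp
    rw [h1, h2, div_le_div_iff_of_pos_right h2R]
    nlinarith [mul_nonneg (sub_nonneg.2 hsR) (le_of_lt (sub_pos.2 htR))]

private lemma phi_exact {R s t : ℝ} (hR : 0 < R) (hs0 : 0 ≤ s) (hsR : s ≤ R)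
    (ht0 : 0 ≤ t) (htR : t ≤ R) :
    (if t < 0 then t else if t ≤ R then (2 * R * t - t ^ 2) / (2 * R) else R / 2) -
      (if s < 0 then s else if s ≤ R then (2 * R * s - s ^ 2) / (2 * R) else R / 2)
      = (R - s) / R * (t - s) - (t - s) ^ 2 / (2 * R) := by
  rw [if_neg (not_lt.2 ht0), if_neg (not_lt.2 hs0), if_pos hsR, if_pos htR]
  field_simp; ring

/-- Global chain rule, case `C ≤ 0`: with `φ(s) = (2Rs - s²)/(2R)` on `[0,R]`
(extended linearly outside), if `Δu ≤ C ≤ 0` and `∇₋u ≥ 1` on `W`, then at every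
`x ∈ W` whose neighbours satisfy `u ≥ 0` and with `u(x) ≤ R`,
`Δ(φ∘u)(x) ≤ C φ'(u(x)) + (P₀/2) φ''(u(x)) ≤ -P₀/(2R)`. -/
theorem global_chain_rule_nonpos {V : Type*} [Fintype V] (P d : V → V → ℝ)
    (hP : ∀ x y, 0 ≤ P x y) (hsupp : ∀ x y, 0 < P x y ↔ 0 < P y x)
    (hd : IsPathDist P d) (hP0 : 0 < P0 P d)
    (W : Set V) (u : V → ℝ) (C R : ℝ) (hC : C ≤ 0) (hR : 0 < R)
    (hlap : ∀ x ∈ W, lap P u x ≤ C)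
    (hgrad : ∀ x ∈ W, 1 ≤ nablaMinus P d u x) :
    let φ : ℝ → ℝ := fun s =>
      if s < 0 then s else if s ≤ R then (2 * R * s - s ^ 2) / (2 * R) else R / 2
    let φ' : ℝ → ℝ := fun s =>
      if s < 0 then 1 else if s ≤ R then (R - s) / R else 0
    let φ'' : ℝ → ℝ := fun s =>
      if 0 ≤ s ∧ s ≤ R then -(1 / R) else 0
    ∀ x ∈ W, (∀ y, 0 < P x y → x ≠ y → 0 ≤ u y) → u x ≤ R →
      lap P (fun z => φ (u z)) x ≤ C * φ' (u x) + P0 P d / 2 * φ'' (u x) ∧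
      C * φ' (u x) + P0 P d / 2 * φ'' (u x) ≤ -(P0 P d) / (2 * R) := by

  intro φ φ' φ'' x hxW hnb huxR
  have hφdef : ∀ t, φ t = if t < 0 then t else if t ≤ R then (2 * R * t - t ^ 2) / (2 * R) else R / 2 := fun _ => rfl
  have hφ'def : ∀ t, φ' t = if t < 0 then (1:ℝ) else if t ≤ R then (R - t) / R else 0 := fun _ => rfl
  have hφ''def : ∀ t, φ'' t = if 0 ≤ t ∧ t ≤ R then -(1 / R) else 0 := fun _ => rfl
  classical
  have : Nonempty V := ⟨x⟩
  -- find the gradient-realizing neighbour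
  obtain ⟨y₀, hy₀max⟩ := Finite.exists_max
    (fun y : V => if 0 < P x y ∧ x ≠ y then max (u x - u y) 0 / d x y else 0)
  have h1 : (1:ℝ) ≤ if 0 < P x y₀ ∧ x ≠ y₀ then max (u x - u y₀) 0 / d x y₀ else 0 := by
    refine le_trans (hgrad x hxW) ?_
    simp only [nablaMinus]
    exact ciSup_le hy₀max
  by_cases hcond : 0 < P x y₀ ∧ x ≠ y₀
  swap
  · rw [if_neg hcond] at h1; norm_num at h1
  obtain ⟨hPxy₀, hney₀⟩ := hcond
  rw [if_pos ⟨hPxy₀, hney₀⟩] at h1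
  have hdpos : 0 < d x y₀ := hd.2.2.2.1 x y₀ hney₀
  have hdiff : d x y₀ ≤ u x - u y₀ := by
    have h2 : 1 * d x y₀ ≤ max (u x - u y₀) 0 := (le_div_iff₀ hdpos).1 h1
    rcases max_cases (u x - u y₀) 0 with ⟨h, _⟩ | ⟨h, _⟩ <;> linarith
  have huy₀ : 0 ≤ u y₀ := hnb y₀ hPxy₀ hney₀
  have hux0 : 0 ≤ u x := by linarith
  have hP0le : P0 P d ≤ P x y₀ * d x y₀ ^ 2 := by
    apply csInf_le
    · refine ⟨0, ?_⟩
      rintro c ⟨a, b, -, -, rfl⟩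
      exact mul_nonneg (hP a b) (sq_nonneg _)
    · exact ⟨x, y₀, hney₀, hPxy₀, rfl⟩
  have hterm : ∀ y, P x y * (φ (u y) - φ (u x)) ≤
      P x y * ((R - u x) / R * (u y - u x)) -
        (if y = y₀ then P x y₀ * (u x - u y₀) ^ 2 / (2 * R) else 0) := by
    intro y
    by_cases hy : y = y₀
    · subst hy
      rw [if_pos rfl, hφdef, hφdef,
        phi_exact hR hux0 huxR huy₀ (by linarith), mul_sub]
      refine le_of_eq ?_
      ring
    · rw [if_neg hy, sub_zero]
      rcases eq_or_lt_of_le (hP x y) with hPy | hPy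
      · rw [← hPy]; ring_nf; exact le_refl _
      · by_cases hxy : x = y
        · subst hxy; simp
        · have huy : 0 ≤ u y := hnb y hPy hxy
          have := phi_tangent hR hux0 huxR huy
          rw [hφdef, hφdef]
          exact mul_le_mul_of_nonneg_left this hPy.le
  have hsum : lap P (fun z => φ (u z)) x ≤
      (R - u x) / R * lap P u x - P x y₀ * (u x - u y₀) ^ 2 / (2 * R) := by
    simp only [lap]
    calc ∑ y, P x y * (φ (u y) - φ (u x))
        ≤ ∑ y, (P x y * ((R - u x) / R * (u y - u x)) -
            (if y = y₀ then P x y₀ * (u x - u y₀) ^ 2 / (2 * R) else 0)) :=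
          Finset.sum_le_sum (fun y _ => hterm y)
      _ = (R - u x) / R * ∑ y, P x y * (u y - u x) -
            P x y₀ * (u x - u y₀) ^ 2 / (2 * R) := by
          rw [Finset.sum_sub_distrib, Finset.sum_ite_eq' Finset.univ y₀
            (fun _ => P x y₀ * (u x - u y₀) ^ 2 / (2 * R)), if_pos (Finset.mem_univ y₀),
            Finset.mul_sum]
          congr 1
          exact Finset.sum_congr rfl (fun y _ => by ring)
  have hfrac : 0 ≤ (R - u x) / R := div_nonneg (by linarith) hR.le
  have h3 : (R - u x) / R * lap P u x ≤ (R - u x) / R * C :=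
    mul_le_mul_of_nonneg_left (hlap x hxW) hfrac
  have h4 : P0 P d ≤ P x y₀ * (u x - u y₀) ^ 2 := by
    refine le_trans hP0le (mul_le_mul_of_nonneg_left ?_ hPxy₀.le)
    nlinarith
  have h5 : P0 P d / (2 * R) ≤ P x y₀ * (u x - u y₀) ^ 2 / (2 * R) := by
    gcongr
  have hφ'x : φ' (u x) = (R - u x) / R := by
    rw [hφ'def, if_neg (not_lt.2 hux0), if_pos huxR]
  have hφ''x : φ'' (u x) = -(1 / R) := by
    rw [hφ''def, if_pos ⟨hux0, huxR⟩]
  constructor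
  · rw [hφ'x, hφ''x]
    have heq : C * ((R - u x) / R) + P0 P d / 2 * -(1 / R)
        = (R - u x) / R * C - P0 P d / (2 * R) := by ring
    rw [heq]
    linarith
  · rw [hφ'x, hφ''x]
    have h6 : C * ((R - u x) / R) ≤ 0 := mul_nonpos_of_nonpos_of_nonneg hC hfrac
    have heq : P0 P d / 2 * -(1 / R) = -(P0 P d) / (2 * R) := by ring
    linarith [heq.le, heq.ge]
end

section
/- For a finite reversible lazy Markov chain (P(x,x) ≥ 1/2, Σ_y P(x,y) = 1) with combinatorial graph distance, and an edge x ∼ y with non-negative Ollivier sectional curvature (i.e., there exists a coupling π of P(x,·) and P(y,·) supported on pairs (x',y') with d(x',y') ≤ 1), every f ∈ Lip(1) with f(y) − f(x) = 1 and every λ ≥ 0 satisfies Δe^{λf}(x)/e^{λf(x)} ≥ Δe^{λf}(y)/e^{λf(y)}. -/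
open Finset Real

/-- Non-negative Ollivier sectional curvature (existence of an `ℓ∞`-coupling) implies
the exponential gradient comparison: `Δe^{λf}(x)/e^{λf(x)} ≥ Δe^{λf}(y)/e^{λf(y)}`
for every `f ∈ Lip(1)` with `f(y) - f(x) = 1` and every `λ ≥ 0`. -/
theorem sectional_implies_exp_comparison {V : Type*} [Fintype V] [DecidableEq V]
    (P : V → V → ℝ) (m : V → ℝ)
    (hP : ∀ x y, 0 ≤ P x y) (hm : ∀ x, 0 < m x)
    (hrev : ∀ x y, m x * P x y = m y * P y x)
    (hlazy : ∀ x, 1 / 2 ≤ P x x) (hrow : ∀ x, ∑ y, P x y = 1)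
    (G : SimpleGraph V) (hG : ∀ x y, G.Adj x y ↔ x ≠ y ∧ 0 < P x y)
    (hconn : G.Connected)
    (x y : V) (hxy : G.Adj x y)
    (cpl : V → V → ℝ) (hcpl : ∀ a b, 0 ≤ cpl a b)
    (hmarg1 : ∀ a, (∑ b, cpl a b) = P x a)
    (hmarg2 : ∀ b, (∑ a, cpl a b) = P y b)
    (hsupport : ∀ a b, 0 < cpl a b → G.dist a b ≤ 1)
    (f : V → ℝ) (hf : ∀ u v, |f u - f v| ≤ (G.dist u v : ℝ))
    (hfxy : f y - f x = 1) (lam : ℝ) (hlam : 0 ≤ lam) :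
    lap P (fun z => Real.exp (lam * f z)) y / Real.exp (lam * f y) ≤
      lap P (fun z => Real.exp (lam * f z)) x / Real.exp (lam * f x) := by
  have key : ∀ z, lap P (fun w => Real.exp (lam * f w)) z / Real.exp (lam * f z)
      = (∑ a, P z a * Real.exp (lam * (f a - f z))) - 1 := by
    intro z
    have h1 : lap P (fun w => Real.exp (lam * f w)) z
        = ∑ a, P z a * (Real.exp (lam * f a) - Real.exp (lam * f z)) := rfl
    rw [h1, Finset.sum_div]
    have h2 : ∀ a ∈ Finset.univ, P z a * (Real.exp (lam * f a) - Real.exp (lam * f z))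
        / Real.exp (lam * f z) = P z a * Real.exp (lam * (f a - f z)) - P z a := by
      intro a _
      rw [mul_sub, sub_div, mul_div_assoc, mul_div_assoc, div_self (Real.exp_pos _).ne',
        mul_one, ← Real.exp_sub, ← mul_sub]
    rw [Finset.sum_congr rfl h2, Finset.sum_sub_distrib, hrow]
  rw [key x, key y]
  apply sub_le_sub_right
  have hx : (∑ a, P x a * Real.exp (lam * (f a - f x)))
      = ∑ a, ∑ b, cpl a b * Real.exp (lam * (f a - f x)) := by
    refine Finset.sum_congr rfl fun a _ => ?_
    rw [← hmarg1 a, Finset.sum_mul]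
  have hy : (∑ b, P y b * Real.exp (lam * (f b - f y)))
      = ∑ a, ∑ b, cpl a b * Real.exp (lam * (f b - f y)) := by
    rw [Finset.sum_comm]
    refine Finset.sum_congr rfl fun b _ => ?_
    rw [← hmarg2 b, Finset.sum_mul]
  rw [hx, hy]
  refine Finset.sum_le_sum fun a _ => Finset.sum_le_sum fun b _ => ?_
  rcases eq_or_lt_of_le (hcpl a b) with h0 | hpos
  · rw [← h0]; simp
  · have hdist : (G.dist a b : ℝ) ≤ 1 := by
      exact_mod_cast hsupport a b hpos
    have hfb : f b - f a ≤ 1 := le_trans (le_trans (le_abs_self _) (hf b a)) (by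
      rwa [G.dist_comm])
    have : f b - f y ≤ f a - f x := by linarith [hfxy]
    exact mul_le_mul_of_nonneg_left
      (Real.exp_le_exp.2 (mul_le_mul_of_nonneg_left this hlam)) (hcpl a b)
end

section
/- For a finite reversible lazy Markov chain with combinatorial distance and an edge x ∼ y: if for all f ∈ Lip(1) with f(y)−f(x) = 1 and all λ ≥ 0 both Δe^{λf}(x)/e^{λf(x)} ≥ Δe^{λf}(y)/e^{λf(y)} and Δe^{−λf}(x)/e^{−λf(x)} ≤ Δe^{−λf}(y)/e^{−λf(y)} hold, then there exists a coupling π between P(x,·) and P(y,·) supported on pairs at distance at most 1 (i.e., the edge has non-negative Ollivier sectional curvature). -/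
/-!
The coupling comes from the supply–demand (fractional Hall) theorem: it exists as soon as
`P(x, A) ≤ P(y, N[A])` for every set `A`, where `N[A]` is the closed neighbourhood, i.e. as soon
as `P(x, A) + P(y, C) ≤ 1` whenever no point of `C` is within distance `1` of `A`. If `x ∈ A`, the
first comparison tested on `f = min 2 (d(·, A))` gives `e^λ (P(x, A) + P(y, C) - 1) ≤ 1` for all
`λ ≥ 0`; if `y ∈ C`, the second one does the same with the roles of `x` and `y` exchanged;
otherwise laziness gives `P(x, A), P(y, C) ≤ 1/2`. The fractional Hall theorem is proved by
repeatedly moving as much mass from some `a` to a related `b` as Hall's condition allows.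
-/

open Finset Real

section FractionalHall

open scoped Classical

variable {α β : Type*} [Fintype β]

noncomputable def relNbhd (R : α → β → Prop) (A : Finset α) : Finset β :=
  {b | ∃ a ∈ A, R a b}

noncomputable def hallSurplus (R : α → β → Prop) (μ : α → ℝ) (ν : β → ℝ) (A : Finset α) : ℝ :=
  ∑ b ∈ relNbhd R A, ν b - ∑ a ∈ A, μ a

noncomputable def hallRank [Fintype α] (R : α → β → Prop) (μ : α → ℝ) (ν : β → ℝ) : ℕ :=
  #{a | μ a ≠ 0} + #{b | ν b ≠ 0} + #{A : Finset α | hallSurplus R μ ν A ≠ 0}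

lemma card_filter_ne_zero_le {ι M : Type*} [Fintype ι] [Zero M] {f g : ι → M}
    (h : ∀ i, f i = 0 → g i = 0) : #{i | g i ≠ 0} ≤ #{i | f i ≠ 0} :=
  card_le_card (monotone_filter_right _ fun i _ => mt (h i))

lemma card_filter_ne_zero_lt {ι M : Type*} [Fintype ι] [Zero M] {f g : ι → M}
    (h : ∀ i, f i = 0 → g i = 0) {i : ι} (hf : f i ≠ 0) (hg : g i = 0) :
    #{i | g i ≠ 0} < #{i | f i ≠ 0} :=
  card_lt_card ⟨monotone_filter_right _ fun i _ => mt (h i),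
    fun hsub => by simpa [hg] using hsub (mem_filter.2 ⟨mem_univ i, hf⟩)⟩

lemma sub_single_nonneg {ι : Type*} {f : ι → ℝ} (hf : ∀ i, 0 ≤ f i) {i : ι} {t : ℝ}
    (ht : t ≤ f i) (j : ι) : 0 ≤ (f - Pi.single i t : ι → ℝ) j := by
  rcases eq_or_ne j i with rfl | h
  · simp [ht]
  · simp [h, hf j]

lemma sub_single_apply_eq_zero {ι : Type*} {f : ι → ℝ} {i j : ι} {t : ℝ} (hi : f i ≠ 0)
    (hj : f j = 0) : (f - Pi.single i t : ι → ℝ) j = 0 := by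
  have h : j ≠ i := by
    rintro rfl
    exact hi hj
  simp [h, hj]

variable {R : α → β → Prop} {μ : α → ℝ} {ν : β → ℝ}

lemma mem_relNbhd {A : Finset α} {b : β} : b ∈ relNbhd R A ↔ ∃ a ∈ A, R a b := by
  simp [relNbhd]

lemma relNbhd_mono {A B : Finset α} (h : A ⊆ B) : relNbhd R A ⊆ relNbhd R B := fun b hb => by
  obtain ⟨a, ha, hab⟩ := mem_relNbhd.1 hb
  exact mem_relNbhd.2 ⟨a, h ha, hab⟩

lemma relNbhd_union (A B : Finset α) : relNbhd R (A ∪ B) = relNbhd R A ∪ relNbhd R B := by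
  ext b
  simp only [mem_union, mem_relNbhd, or_and_right, exists_or]

lemma hallSurplus_union_add_inter_le (hν : ∀ b, 0 ≤ ν b) (A B : Finset α) :
    hallSurplus R μ ν (A ∪ B) + hallSurplus R μ ν (A ∩ B) ≤
      hallSurplus R μ ν A + hallSurplus R μ ν B := by
  have hμ := sum_union_inter (s₁ := A) (s₂ := B) (f := μ)
  have hν' := sum_union_inter (s₁ := relNbhd R A) (s₂ := relNbhd R B) (f := ν)
  have hinter : ∑ b ∈ relNbhd R (A ∩ B), ν b ≤ ∑ b ∈ relNbhd R A ∩ relNbhd R B, ν b :=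
    sum_le_sum_of_subset_of_nonneg
      (subset_inter (relNbhd_mono inter_subset_left) (relNbhd_mono inter_subset_right))
      fun b _ _ => hν b
  simp only [hallSurplus, relNbhd_union]
  linarith

lemma hallSurplus_union_eq_zero (hν : ∀ b, 0 ≤ ν b) (hHall : ∀ A, 0 ≤ hallSurplus R μ ν A)
    {A B : Finset α} (hA : hallSurplus R μ ν A = 0) (hB : hallSurplus R μ ν B = 0) :
    hallSurplus R μ ν (A ∪ B) = 0 := by
  linarith [hallSurplus_union_add_inter_le (R := R) (μ := μ) hν A B, hHall (A ∪ B),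
    hHall (A ∩ B)]

lemma hallSurplus_sub_single (a : α) (b : β) (t : ℝ) (A : Finset α) :
    hallSurplus R (μ - Pi.single a t) (ν - Pi.single b t) A =
      hallSurplus R μ ν A - (if b ∈ relNbhd R A then t else 0) + (if a ∈ A then t else 0) := by
  simp only [hallSurplus, Pi.sub_apply, sum_sub_distrib, sum_pi_single']
  ring

lemma hallSurplus_sub_single_mem_Icc (hHall : ∀ A, 0 ≤ hallSurplus R μ ν A) {a : α} {b : β}
    {t : ℝ} (hab : R a b) (ht : 0 ≤ t)
    (htA : ∀ A, a ∉ A → b ∈ relNbhd R A → t ≤ hallSurplus R μ ν A) (A : Finset α) :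
    hallSurplus R (μ - Pi.single a t) (ν - Pi.single b t) A ∈
      Set.Icc 0 (hallSurplus R μ ν A) := by
  rw [hallSurplus_sub_single]
  by_cases haA : a ∈ A
  · have hbA : b ∈ relNbhd R A := mem_relNbhd.2 ⟨a, haA, hab⟩
    simp [haA, hbA, hHall A]
  · by_cases hbA : b ∈ relNbhd R A
    · simp only [haA, hbA, if_true, if_false]
      constructor <;> linarith [htA A haA hbA]
    · simp [haA, hbA, hHall A]

variable [Fintype α]

/-- The union `U` of all tight sets avoiding `a` is tight; Hall's condition for `insert a U`
provides `b`, and any tight set that avoids `a` lies in `U`, so it cannot reach `b`. -/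
lemma exists_rel_forall_pos_hallSurplus (hν : ∀ b, 0 ≤ ν b)
    (hHall : ∀ A, 0 ≤ hallSurplus R μ ν A) {a : α} (ha : 0 < μ a) :
    ∃ b, R a b ∧ 0 < ν b ∧ ∀ A, a ∉ A → b ∈ relNbhd R A → 0 < hallSurplus R μ ν A := by
  set U := ({A : Finset α | hallSurplus R μ ν A = 0 ∧ a ∉ A} : Finset _).sup id
  have hU : hallSurplus R μ ν U = 0 ∧ a ∉ U := by
    refine sup_induction (p := fun S => hallSurplus R μ ν S = 0 ∧ a ∉ S) ?_ ?_ ?_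
    · simp [hallSurplus, relNbhd]
    · exact fun A hA B hB => ⟨hallSurplus_union_eq_zero hν hHall hA.1 hB.1,
        by simp [hA.2, hB.2]⟩
    · intro A hA
      simpa using hA
  by_contra! hno
  have hreach : ∀ b, R a b → ν b ≠ 0 → b ∈ relNbhd R U := by
    intro b hab hb
    obtain ⟨A, haA, hbA, hA⟩ := hno b hab ((hν b).lt_of_ne' hb)
    have hAU : A ⊆ U := le_sup (f := id) (by simpa using ⟨(hHall A).antisymm' hA, haA⟩)
    exact relNbhd_mono hAU hbA
  have hnbhd : ∑ b ∈ relNbhd R U, ν b = ∑ b ∈ relNbhd R (insert a U), ν b := by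
    refine sum_subset (relNbhd_mono (subset_insert a U)) fun b hb hbU => ?_
    obtain ⟨a', ha', hab⟩ := mem_relNbhd.1 hb
    rcases mem_insert.1 ha' with rfl | ha'
    · exact not_not.1 (mt (hreach b hab) hbU)
    · exact absurd (mem_relNbhd.2 ⟨a', ha', hab⟩) hbU
  have hinsert := hHall (insert a U)
  have hUtight := hU.1
  rw [hallSurplus, sum_insert hU.2, ← hnbhd] at hinsert
  rw [hallSurplus] at hUtight
  linarith

lemma hallRank_lt {μ' : α → ℝ} {ν' : β → ℝ} (hμ : ∀ a, μ a = 0 → μ' a = 0)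
    (hν : ∀ b, ν b = 0 → ν' b = 0)
    (hS : ∀ A, hallSurplus R μ ν A = 0 → hallSurplus R μ' ν' A = 0)
    (hdrop : (∃ a, μ a ≠ 0 ∧ μ' a = 0) ∨ (∃ b, ν b ≠ 0 ∧ ν' b = 0) ∨
      ∃ A, hallSurplus R μ ν A ≠ 0 ∧ hallSurplus R μ' ν' A = 0) :
    hallRank R μ' ν' < hallRank R μ ν := by
  have h₁ := card_filter_ne_zero_le hμ
  have h₂ := card_filter_ne_zero_le hν
  have h₃ := card_filter_ne_zero_le (f := hallSurplus R μ ν) hS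
  unfold hallRank
  rcases hdrop with ⟨a, ha, ha'⟩ | ⟨b, hb, hb'⟩ | ⟨A, hA, hA'⟩
  · have := card_filter_ne_zero_lt hμ ha ha'
    omega
  · have := card_filter_ne_zero_lt hν hb hb'
    omega
  · have := card_filter_ne_zero_lt (f := hallSurplus R μ ν) hS hA hA'
    omega

/-- Move as much mass `t` from `a` to some `b` with `R a b` as Hall's condition allows;
`t` is the least of `μ a`, `ν b` and the surpluses of the sets that avoid `a` but reach `b`,
so one of these drops to zero. -/
lemma exists_hallTransfer (hμ : ∀ a, 0 ≤ μ a) (hν : ∀ b, 0 ≤ ν b)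
    (hHall : ∀ A, 0 ≤ hallSurplus R μ ν A) {a : α} (ha : 0 < μ a) :
    ∃ (b : β) (t : ℝ), R a b ∧ 0 < t ∧ (∀ a', 0 ≤ (μ - Pi.single a t : α → ℝ) a') ∧
      (∀ b', 0 ≤ (ν - Pi.single b t : β → ℝ) b') ∧
      (∀ A, 0 ≤ hallSurplus R (μ - Pi.single a t) (ν - Pi.single b t) A) ∧
      hallRank R (μ - Pi.single a t) (ν - Pi.single b t) < hallRank R μ ν := by
  obtain ⟨b, hab, hb, hreach⟩ := exists_rel_forall_pos_hallSurplus hν hHall ha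
  set bad : Finset (Finset α) := {A | a ∉ A ∧ b ∈ relNbhd R A}
  set cands := insert (μ a) (insert (ν b) (bad.image (hallSurplus R μ ν)))
  have hne : cands.Nonempty := insert_nonempty _ _
  set t := cands.min' hne
  have ht : ∀ s ∈ cands, t ≤ s := fun s hs => min'_le _ _ hs
  have htμ : t ≤ μ a := ht _ (mem_insert_self _ _)
  have htν : t ≤ ν b := ht _ (mem_insert_of_mem (mem_insert_self _ _))
  have htbad : ∀ A, a ∉ A → b ∈ relNbhd R A → t ≤ hallSurplus R μ ν A := fun A haA hbA =>
    ht _ (mem_insert_of_mem (mem_insert_of_mem (mem_image_of_mem _ (by simp [bad, haA, hbA]))))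
  have htpos : 0 < t := by
    refine (lt_min'_iff _ _).2 ?_
    simp only [cands, bad, mem_insert, mem_image, mem_filter, mem_univ, true_and]
    rintro s (rfl | rfl | ⟨A, ⟨haA, hbA⟩, rfl⟩)
    exacts [ha, hb, hreach A haA hbA]
  have hsurp := hallSurplus_sub_single_mem_Icc hHall hab htpos.le htbad
  refine ⟨b, t, hab, htpos, sub_single_nonneg hμ htμ, sub_single_nonneg hν htν,
    fun A => (hsurp A).1, hallRank_lt (fun a' => sub_single_apply_eq_zero ha.ne')
    (fun b' => sub_single_apply_eq_zero hb.ne') (fun A hA => ?_) ?_⟩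
  · exact le_antisymm (hA ▸ (hsurp A).2) (hsurp A).1
  · rcases mem_insert.1 (min'_mem cands hne) with h | h
    · exact Or.inl ⟨a, ha.ne', by simp [← h, t]⟩
    rcases mem_insert.1 h with h | h
    · exact Or.inr (Or.inl ⟨b, hb.ne', by simp [← h, t]⟩)
    obtain ⟨A, hA, hAt⟩ := mem_image.1 h
    simp only [bad, mem_filter, mem_univ, true_and] at hA
    refine Or.inr (Or.inr ⟨A, ?_, ?_⟩)
    · rw [hAt]; exact htpos.ne'
    · rw [hallSurplus_sub_single]
      simp [hA.1, hA.2, hAt, t]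

theorem exists_coupling_of_hall (hμ : ∀ a, 0 ≤ μ a) (hν : ∀ b, 0 ≤ ν b)
    (hsum : ∑ a, μ a = ∑ b, ν b) (hHall : ∀ A, 0 ≤ hallSurplus R μ ν A) :
    ∃ T : α → β → ℝ, (∀ a b, 0 ≤ T a b) ∧ (∀ a, ∑ b, T a b = μ a) ∧
      (∀ b, ∑ a, T a b = ν b) ∧ (∀ a b, 0 < T a b → R a b) := by
  induction hn : hallRank R μ ν using Nat.strong_induction_on generalizing μ ν with
  | _ n ih =>
  by_cases hμ0 : ∀ a, μ a = 0
  · have hν0 : ∀ b, ν b = 0 := by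
      have : ∑ b, ν b = 0 := by rw [← hsum]; exact sum_eq_zero fun a _ => hμ0 a
      exact fun b => (sum_eq_zero_iff_of_nonneg fun b _ => hν b).1 this b (mem_univ b)
    exact ⟨0, fun _ _ => le_rfl, by simp [hμ0], by simp [hν0], by simp⟩
  push Not at hμ0
  obtain ⟨a, ha⟩ := hμ0
  obtain ⟨b, t, hab, ht, hμ', hν', hHall', hrank⟩ :=
    exists_hallTransfer hμ hν hHall ((hμ a).lt_of_ne' ha)
  obtain ⟨T, hT0, hTrow, hTcol, hTR⟩ :=
    ih _ (hn ▸ hrank) hμ' hν' (by simp [sum_sub_distrib, hsum]) hHall' rfl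
  refine ⟨fun a' b' => T a' b' + if a' = a ∧ b' = b then t else 0, fun a' b' => ?_,
    fun a' => ?_, fun b' => ?_, fun a' b' hpos => ?_⟩
  · have := hT0 a' b'
    dsimp only
    split_ifs <;> linarith
  · rw [sum_add_distrib, hTrow]
    rcases eq_or_ne a' a with rfl | h <;> simp [*]
  · rw [sum_add_distrib, hTcol]
    rcases eq_or_ne b' b with rfl | h <;> simp [*]
  · by_cases h : a' = a ∧ b' = b
    · exact h.1 ▸ h.2 ▸ hab
    · exact hTR a' b' (by simpa [h] using hpos)

end FractionalHall

section Graph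

variable {V : Type*} {G : SimpleGraph V} {f : V → ℝ}

lemma SimpleGraph.Walk.le_add_length (hf : ∀ u v, G.Adj u v → f v ≤ f u + 1) {u v : V}
    (p : G.Walk u v) : f v ≤ f u + p.length := by
  induction p with
  | nil => simp
  | cons h p ih =>
    rw [SimpleGraph.Walk.length_cons]
    push_cast
    linarith [hf _ _ h]

lemma abs_sub_le_dist_of_forall_adj (hconn : G.Connected)
    (hf : ∀ u v, G.Adj u v → f v ≤ f u + 1) (u v : V) : |f u - f v| ≤ G.dist u v := by
  obtain ⟨p, hp⟩ := hconn.exists_walk_length_eq_dist u v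
  have h₁ := p.le_add_length hf
  have h₂ := p.reverse.le_add_length hf
  rw [SimpleGraph.Walk.length_reverse, hp] at h₂
  rw [hp] at h₁
  rw [abs_sub_le_iff]
  constructor <;> linarith

open Classical in
/-- The graph distance from `z` to `A`, truncated at `2`. -/
noncomputable def nbhdLayer (G : SimpleGraph V) (A : Finset V) (z : V) : ℝ :=
  if z ∈ A then 0 else if ∃ a ∈ A, G.Adj a z then 1 else 2

variable {A : Finset V} {z : V}

lemma nbhdLayer_of_mem (hz : z ∈ A) : nbhdLayer G A z = 0 := by
  simp [nbhdLayer, hz]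

lemma nbhdLayer_le_one {a : V} (ha : a ∈ A) (haz : a = z ∨ G.Adj a z) : nbhdLayer G A z ≤ 1 := by
  unfold nbhdLayer
  split_ifs with hz hadj
  · norm_num
  · norm_num
  · rcases haz with rfl | haz
    exacts [absurd ha hz, absurd ⟨a, ha, haz⟩ hadj]

lemma nbhdLayer_eq_one {a : V} (ha : a ∈ A) (hadj : G.Adj a z) (hz : z ∉ A) :
    nbhdLayer G A z = 1 := by
  simp [nbhdLayer, hz, show ∃ a ∈ A, G.Adj a z from ⟨a, ha, hadj⟩]

lemma nbhdLayer_eq_two (hz : ∀ a ∈ A, a ≠ z ∧ ¬G.Adj a z) : nbhdLayer G A z = 2 := by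
  have hzA : z ∉ A := fun h => (hz z h).1 rfl
  have hadj : ¬∃ a ∈ A, G.Adj a z := fun ⟨a, ha, hadj⟩ => (hz a ha).2 hadj
  simp [nbhdLayer, hzA, hadj]

lemma abs_nbhdLayer_sub_le (hconn : G.Connected) (u v : V) :
    |nbhdLayer G A u - nbhdLayer G A v| ≤ G.dist u v := by
  refine abs_sub_le_dist_of_forall_adj hconn (fun u v huv => ?_) u v
  by_cases hu : u ∈ A
  · rw [nbhdLayer_of_mem hu]
    linarith [nbhdLayer_le_one hu (Or.inr huv)]
  · have hu₁ : 1 ≤ nbhdLayer G A u := by unfold nbhdLayer; split_ifs <;> norm_num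
    have hv₂ : nbhdLayer G A v ≤ 2 := by unfold nbhdLayer; split_ifs <;> norm_num
    linarith

lemma eq_or_adj_of_ne_zero {P : V → V → ℝ} (hP : ∀ x y, 0 ≤ P x y)
    (hG : ∀ x y, G.Adj x y ↔ x ≠ y ∧ 0 < P x y) {x z : V} (h : P x z ≠ 0) :
    x = z ∨ G.Adj x z :=
  or_iff_not_imp_left.2 fun hxz => (hG x z).2 ⟨hxz, (hP x z).lt_of_ne' h⟩

end Graph

lemma nonpos_of_forall_exp_mul_le_one {d : ℝ} (h : ∀ t : ℝ, 0 ≤ t → exp t * d ≤ 1) : d ≤ 0 := by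
  by_contra! hd
  have h₁ := h (1 / d) (by positivity)
  have h₂ : (1 / d + 1) * d ≤ exp (1 / d) * d :=
    mul_le_mul_of_nonneg_right (add_one_le_exp _) hd.le
  rw [add_mul, one_div_mul_cancel hd.ne'] at h₂
  linarith

section MarkovChain

variable {V : Type*} [Fintype V] {P : V → V → ℝ} {G : SimpleGraph V} {x y : V}

lemma lap_exp_div_exp (hrow : ∑ z, P x z = 1) (f : V → ℝ) (c : ℝ) :
    lap P (fun z => exp (c * f z)) x / exp (c * f x) =
      ∑ z, P x z * exp (c * (f z - f x)) - 1 := by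
  rw [lap, sum_div, ← hrow, ← sum_sub_distrib]
  refine sum_congr rfl fun z _ => ?_
  rw [show c * (f z - f x) = c * f z - c * f x by ring, exp_sub]
  field_simp

variable (P G) in
def ExpGradientComparison (x y : V) : Prop :=
  ∀ f : V → ℝ, (∀ u v, |f u - f v| ≤ (G.dist u v : ℝ)) → f y - f x = 1 →
    ∀ lam : ℝ, 0 ≤ lam →
      lap P (fun z => exp (lam * f z)) y / exp (lam * f y) ≤
        lap P (fun z => exp (lam * f z)) x / exp (lam * f x)

lemma exp_mul_sum_le_sum_mul_exp_nbhdLayer (hP : ∀ x y, 0 ≤ P x y) {A C : Finset V}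
    (hAC : ∀ a ∈ A, ∀ c ∈ C, a ≠ c ∧ ¬G.Adj a c) (lam : ℝ) :
    exp lam * ∑ c ∈ C, P y c ≤ ∑ z, P y z * exp (lam * (nbhdLayer G A z - 1)) :=
  calc exp lam * ∑ c ∈ C, P y c = ∑ c ∈ C, P y c * exp (lam * (nbhdLayer G A c - 1)) := by
        rw [mul_sum]
        refine sum_congr rfl fun c hc => ?_
        rw [nbhdLayer_eq_two fun a ha => hAC a ha c hc]
        ring_nf
    _ ≤ ∑ z, P y z * exp (lam * (nbhdLayer G A z - 1)) :=
        sum_le_univ_sum_of_nonneg fun z => mul_nonneg (hP y z) (exp_pos _).le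

lemma sum_mul_exp_nbhdLayer_le (hP : ∀ x y, 0 ≤ P x y) (hrow : ∀ x, ∑ y, P x y = 1)
    (hG : ∀ x y, G.Adj x y ↔ x ≠ y ∧ 0 < P x y) {A : Finset V} (hxA : x ∈ A) {lam : ℝ}
    (hlam : 0 ≤ lam) :
    ∑ z, P x z * exp (lam * nbhdLayer G A z) ≤
      ∑ a ∈ A, P x a + exp lam * (1 - ∑ a ∈ A, P x a) := by
  classical
  calc ∑ z, P x z * exp (lam * nbhdLayer G A z)
      = ∑ a ∈ A, P x a * exp (lam * nbhdLayer G A a) +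
          ∑ z ∈ Aᶜ, P x z * exp (lam * nbhdLayer G A z) :=
        (sum_add_sum_compl A _).symm
    _ ≤ ∑ a ∈ A, P x a + ∑ z ∈ Aᶜ, P x z * exp lam := by
        refine add_le_add (le_of_eq (sum_congr rfl fun a ha => ?_)) (sum_le_sum fun z _ => ?_)
        · simp [nbhdLayer_of_mem ha]
        · by_cases hz : P x z = 0
          · simp [hz]
          refine mul_le_mul_of_nonneg_left (exp_le_exp.2 ?_) (hP x z)
          exact mul_le_of_le_one_right hlam
            (nbhdLayer_le_one hxA (eq_or_adj_of_ne_zero hP hG hz))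
    _ = ∑ a ∈ A, P x a + exp lam * (1 - ∑ a ∈ A, P x a) := by
        rw [← sum_mul, ← hrow x, ← sum_add_sum_compl A (P x)]
        ring

/-- Test the comparison against `f = nbhdLayer G A`: it gives
`e^λ (P(x,A) + P(y,C) - 1) ≤ 1` for every `λ ≥ 0`. -/
lemma ExpGradientComparison.sum_add_sum_le_one (hcomp : ExpGradientComparison P G x y)
    (hP : ∀ x y, 0 ≤ P x y) (hrow : ∀ x, ∑ y, P x y = 1)
    (hG : ∀ x y, G.Adj x y ↔ x ≠ y ∧ 0 < P x y) (hconn : G.Connected) (hxy : G.Adj x y)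
    {A C : Finset V} (hxA : x ∈ A) (hAC : ∀ a ∈ A, ∀ c ∈ C, a ≠ c ∧ ¬G.Adj a c) :
    ∑ a ∈ A, P x a + ∑ c ∈ C, P y c ≤ 1 := by
  have hPA : ∑ a ∈ A, P x a ≤ 1 := hrow x ▸ sum_le_univ_sum_of_nonneg (hP x)
  by_cases hyA : y ∈ A
  · have hPC : ∑ c ∈ C, P y c = 0 := sum_eq_zero fun c hc => by
      by_contra h
      rcases eq_or_adj_of_ne_zero hP hG h with h | h
      exacts [(hAC y hyA c hc).1 h, (hAC y hyA c hc).2 h]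
    linarith
  have hfx : nbhdLayer G A x = 0 := nbhdLayer_of_mem hxA
  have hfy : nbhdLayer G A y = 1 := nbhdLayer_eq_one hxA hxy hyA
  refine sub_nonpos.1 (nonpos_of_forall_exp_mul_le_one fun lam hlam => ?_)
  have h := hcomp (nbhdLayer G A) (abs_nbhdLayer_sub_le hconn) (by rw [hfx, hfy]; norm_num)
    lam hlam
  rw [lap_exp_div_exp (hrow y), lap_exp_div_exp (hrow x), hfx, hfy] at h
  simp only [sub_zero] at h
  linarith [exp_mul_sum_le_sum_mul_exp_nbhdLayer (y := y) hP hAC lam,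
    sum_mul_exp_nbhdLayer_le hP hrow hG hxA hlam]

lemma sum_add_sum_le_one_of_separated (hxy' : ExpGradientComparison P G x y)
    (hyx' : ExpGradientComparison P G y x) (hP : ∀ x y, 0 ≤ P x y)
    (hlazy : ∀ x, 1 / 2 ≤ P x x) (hrow : ∀ x, ∑ y, P x y = 1)
    (hG : ∀ x y, G.Adj x y ↔ x ≠ y ∧ 0 < P x y) (hconn : G.Connected) (hxy : G.Adj x y)
    {A C : Finset V} (hAC : ∀ a ∈ A, ∀ c ∈ C, a ≠ c ∧ ¬G.Adj a c) :
    ∑ a ∈ A, P x a + ∑ c ∈ C, P y c ≤ 1 := by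
  classical
  by_cases hxA : x ∈ A
  · exact hxy'.sum_add_sum_le_one hP hrow hG hconn hxy hxA hAC
  by_cases hyC : y ∈ C
  · have := hyx'.sum_add_sum_le_one hP hrow hG hconn hxy.symm hyC fun c hc a ha =>
      ⟨(hAC a ha c hc).1.symm, fun h => (hAC a ha c hc).2 h.symm⟩
    linarith
  have hx := sum_le_univ_sum_of_nonneg (s := insert x A) (hP x)
  have hy := sum_le_univ_sum_of_nonneg (s := insert y C) (hP y)
  rw [sum_insert hxA, hrow] at hx
  rw [sum_insert hyC, hrow] at hy
  linarith [hlazy x, hlazy y]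

end MarkovChain

theorem exp_comparison_implies_sectional_general {V : Type*} [Fintype V]
    (P : V → V → ℝ)
    (hP : ∀ x y, 0 ≤ P x y)
    (hlazy : ∀ x, 1 / 2 ≤ P x x) (hrow : ∀ x, ∑ y, P x y = 1)
    (G : SimpleGraph V) (hG : ∀ x y, G.Adj x y ↔ x ≠ y ∧ 0 < P x y)
    (hconn : G.Connected)
    (x y : V) (hxy : G.Adj x y)
    (hcomp : ∀ f : V → ℝ, (∀ u v, |f u - f v| ≤ (G.dist u v : ℝ)) → f y - f x = 1 →
      ∀ lam : ℝ, 0 ≤ lam →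
        (lap P (fun z => Real.exp (lam * f z)) y / Real.exp (lam * f y) ≤
          lap P (fun z => Real.exp (lam * f z)) x / Real.exp (lam * f x)) ∧
        (lap P (fun z => Real.exp (-lam * f z)) x / Real.exp (-lam * f x) ≤
          lap P (fun z => Real.exp (-lam * f z)) y / Real.exp (-lam * f y))) :
    ∃ cpl : V → V → ℝ, (∀ a b, 0 ≤ cpl a b) ∧
      (∀ a, (∑ b, cpl a b) = P x a) ∧ (∀ b, (∑ a, cpl a b) = P y b) ∧
      (∀ a b, 0 < cpl a b → G.dist a b ≤ 1) := by
  classical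
  have hxy' : ExpGradientComparison P G x y := fun f hf hfxy lam hlam =>
    (hcomp f hf hfxy lam hlam).1
  have hyx' : ExpGradientComparison P G y x := fun f hf hfyx lam hlam => by
    have hf' : ∀ u v, |(-f) u - (-f) v| ≤ (G.dist u v : ℝ) := fun u v => by
      rw [Pi.neg_apply, Pi.neg_apply, neg_sub_neg, abs_sub_comm]
      exact hf u v
    simpa only [Pi.neg_apply, neg_mul_neg] using
      (hcomp (-f) hf' (by simp only [Pi.neg_apply]; linarith) lam hlam).2
  set R : V → V → Prop := fun a b => a = b ∨ G.Adj a b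
  have hHall : ∀ A, 0 ≤ hallSurplus R (P x) (P y) A := fun A => by
    have hsep := sum_add_sum_le_one_of_separated hxy' hyx' hP hlazy hrow hG hconn hxy
      (C := (relNbhd R A)ᶜ) fun a ha c hc => by
        simp only [mem_compl, mem_relNbhd, not_exists, not_and, R, not_or] at hc
        exact hc a ha
    have hsplit := sum_add_sum_compl (relNbhd R A) (P y)
    rw [hallSurplus]
    linarith [hrow y]
  obtain ⟨T, hT0, hTrow, hTcol, hTR⟩ :=
    exists_coupling_of_hall (hP x) (hP y) (by rw [hrow, hrow]) hHall
  refine ⟨T, hT0, hTrow, hTcol, fun a b hab => ?_⟩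
  rcases hTR a b hab with rfl | h
  · simp
  · exact (SimpleGraph.dist_eq_one_iff_adj.2 h).le

/-- If the exponential gradient comparisons hold for all `f ∈ Lip(1)` with
`f(y)-f(x) = 1` and all `λ ≥ 0`, then the edge `x∼y` has non-negative
Ollivier sectional curvature, i.e. there exists a coupling of `P(x,·)` and `P(y,·)`
supported on pairs at distance at most `1`. -/
theorem exp_comparison_implies_sectional {V : Type*} [Fintype V] [DecidableEq V]
    (P : V → V → ℝ) (m : V → ℝ)
    (hP : ∀ x y, 0 ≤ P x y) (hm : ∀ x, 0 < m x)
    (hrev : ∀ x y, m x * P x y = m y * P y x)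
    (hlazy : ∀ x, 1 / 2 ≤ P x x) (hrow : ∀ x, ∑ y, P x y = 1)
    (G : SimpleGraph V) (hG : ∀ x y, G.Adj x y ↔ x ≠ y ∧ 0 < P x y)
    (hconn : G.Connected)
    (x y : V) (hxy : G.Adj x y)
    (hcomp : ∀ f : V → ℝ, (∀ u v, |f u - f v| ≤ (G.dist u v : ℝ)) → f y - f x = 1 →
      ∀ lam : ℝ, 0 ≤ lam →
        (lap P (fun z => Real.exp (lam * f z)) y / Real.exp (lam * f y) ≤
          lap P (fun z => Real.exp (lam * f z)) x / Real.exp (lam * f x)) ∧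
        (lap P (fun z => Real.exp (-lam * f z)) x / Real.exp (-lam * f x) ≤
          lap P (fun z => Real.exp (-lam * f z)) y / Real.exp (-lam * f y))) :
    ∃ cpl : V → V → ℝ, (∀ a b, 0 ≤ cpl a b) ∧
      (∀ a, (∑ b, cpl a b) = P x a) ∧ (∀ b, (∑ a, cpl a b) = P y b) ∧
      (∀ a b, 0 < cpl a b → G.dist a b ≤ 1) :=
  exp_comparison_implies_sectional_general P hP hlazy hrow G hG hconn x y hxy hcomp
end

section
/- Let G = (V,P,d) be a finite reversible metric Markov chain with non-negative Ollivier curvature and let W ⊂ V with inner vertex boundary K = supp(Δ1_W) ∩ W. Then there exists f ∈ Lip(1) and a constant C such that Δf = C on K, f is the minimal 1-Lipschitz extension of f|_K on X = W∖K, f is the maximal 1-Lipschitz extension of f|_K on Y = V∖W, and moreover Δf ≥ C on X and Δf ≤ C on Y. -/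
open Finset Real

/-!
Fix `ε > 0` small and let `E u` agree with `u` on `K`, be the minimal 1-Lipschitz extension of
`u|_K` on `W` and the maximal one off `W`. Since every edge leaving `W` starts in `K`, `E u` is
1-Lipschitz, and by non-negative curvature so is `S u = E u + ε Δ(E u)`. The map `S` is monotone
and commutes with adding constants, hence is sup-norm nonexpansive. The fixed points of the
contractions `s • S`, `s ↑ 1`, normalised at one vertex, are 1-Lipschitz and hence bounded;
a limit point `u` satisfies `S u = u + γ`, so `f = E u` has `Δf = C := γ / ε` on `K`.
At `x ∈ W \ K` the minimal extension is attained, `f x = f k - d(k, x)` with `k ∈ K`, and since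
`f + ε Δf` is still 1-Lipschitz this forces `Δf(x) ≥ Δf(k) = C`; symmetrically `Δf ≤ C` off `W`.
-/

section Lip1

variable {V : Type*} {d : V → V → ℝ} {f g : V → ℝ}

lemma Lip1.sub_le (hf : Lip1 d f) (u v : V) : f u - f v ≤ d u v :=
  (abs_sub_le_iff.1 (hf u v)).1

lemma lip1_of_sub_le (hsymm : ∀ x y, d x y = d y x) (h : ∀ u v, f u - f v ≤ d u v) :
    Lip1 d f :=
  fun u v => abs_sub_le_iff.2 ⟨h u v, hsymm u v ▸ h v u⟩

lemma lip1_const (hd : ∀ x y, 0 ≤ d x y) (c : ℝ) : Lip1 d (fun _ => c) :=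
  fun u v => by simpa using hd u v

lemma Lip1.add_const (hf : Lip1 d f) (c : ℝ) : Lip1 d (fun x => f x + c) :=
  fun u v => by simpa using hf u v

lemma Lip1.smul (hf : Lip1 d f) {s : ℝ} (hs0 : 0 ≤ s) (hs1 : s ≤ 1) : Lip1 d (s • f) :=
  fun u v => calc
    |(s • f) u - (s • f) v| = s * |f u - f v| := by
      simp only [Pi.smul_apply, smul_eq_mul, ← mul_sub, abs_mul, abs_of_nonneg hs0]
    _ ≤ 1 * |f u - f v| := by gcongr
    _ ≤ d u v := by simpa using hf u v

lemma Lip1.max (hf : Lip1 d f) (hg : Lip1 d g) : Lip1 d (fun x => max (f x) (g x)) :=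
  fun u v => (abs_max_sub_max_le_max _ _ _ _).trans (max_le (hf u v) (hg u v))

lemma lip1_const_sub_dist (hsymm : ∀ x y, d x y = d y x)
    (htri : ∀ x y z, d x z ≤ d x y + d y z) (c : ℝ) (y : V) : Lip1 d (fun z => c - d z y) :=
  lip1_of_sub_le hsymm fun u v => by linarith [htri v u y, hsymm u v]

lemma isClosed_setOf_lip1 : IsClosed {f : V → ℝ | Lip1 d f} := by
  simp only [Lip1, Set.ofPred_forall]
  exact isClosed_iInter fun u => isClosed_iInter fun v =>
    isClosed_le (by fun_prop) continuous_const

lemma isLeast_lip1_extensions {K : Set V} (hf : Lip1 d f) {k x : V} (hk : k ∈ K)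
    (hfx : f x = f k - d k x) :
    IsLeast {v | ∃ g : V → ℝ, Lip1 d g ∧ (∀ k ∈ K, g k = f k) ∧ v = g x} (f x) := by
  refine ⟨⟨f, hf, fun _ _ => rfl, rfl⟩, ?_⟩
  rintro _ ⟨g, hg, hgK, rfl⟩
  linarith [hg.sub_le k x, hgK k hk]

lemma isGreatest_lip1_extensions {K : Set V} (hf : Lip1 d f) {k x : V} (hk : k ∈ K)
    (hfx : f x = f k + d x k) :
    IsGreatest {v | ∃ g : V → ℝ, Lip1 d g ∧ (∀ k ∈ K, g k = f k) ∧ v = g x} (f x) := by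
  refine ⟨⟨f, hf, fun _ _ => rfl, rfl⟩, ?_⟩
  rintro _ ⟨g, hg, hgK, rfl⟩
  linarith [hg.sub_le x k, hgK k hk]

lemma not_bddBelow_lip1_extensions_empty (hd : ∀ x y, 0 ≤ d x y) (f : V → ℝ) (x : V) :
    ¬BddBelow {v | ∃ g : V → ℝ, Lip1 d g ∧ (∀ k ∈ (∅ : Set V), g k = f k) ∧ v = g x} := by
  rintro ⟨b, hb⟩
  linarith [hb ⟨fun _ => b - 1, lip1_const hd _, by simp, rfl⟩]

lemma not_bddAbove_lip1_extensions_empty (hd : ∀ x y, 0 ≤ d x y) (f : V → ℝ) (x : V) :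
    ¬BddAbove {v | ∃ g : V → ℝ, Lip1 d g ∧ (∀ k ∈ (∅ : Set V), g k = f k) ∧ v = g x} := by
  rintro ⟨b, hb⟩
  linarith [hb ⟨fun _ => b + 1, lip1_const hd _, by simp, rfl⟩]

end Lip1

namespace IsPathDist

variable {V : Type*} {P d : V → V → ℝ}

lemma dist_self (hd : IsPathDist P d) (x : V) : d x x = 0 := hd.1 x

lemma symm (hd : IsPathDist P d) (x y : V) : d x y = d y x := hd.2.1 x y

lemma triangle (hd : IsPathDist P d) (x y z : V) : d x z ≤ d x y + d y z := hd.2.2.1 x y z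

lemma nonneg (hd : IsPathDist P d) (x y : V) : 0 ≤ d x y := by
  linarith [hd.triangle x y x, hd.dist_self x, hd.symm x y]

lemma lip1_of_forall_edge (hd : IsPathDist P d) {g : V → ℝ}
    (h : ∀ x y, 0 < P x y → g y - g x ≤ d x y) : Lip1 d g := by
  refine lip1_of_sub_le hd.symm fun u v => ?_
  obtain ⟨n, c, rfl, rfl, hedge, hlen⟩ := hd.2.2.2.2 v u
  rw [hd.symm, ← hlen, ← Finset.sum_range_sub (fun i => g (c i))]
  exact Finset.sum_le_sum fun i hi => h _ _ (hedge i (Finset.mem_range.1 hi))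

end IsPathDist

section Laplacian

variable {V : Type*} [Fintype V] {P d : V → V → ℝ}

lemma lap_add_const (P : V → V → ℝ) (g : V → ℝ) (c : ℝ) :
    lap P (fun z => g z + c) = lap P g := by
  ext x
  simp only [lap, add_sub_add_right_eq_sub]

lemma lap_le_lap_add (hP : ∀ x y, 0 ≤ P x y) {f g : V → ℝ} {a : ℝ} {x : V}
    (h : ∀ z, f z - f x ≤ g z - g x + a) : lap P f x ≤ lap P g x + a * ∑ z, P x z := by
  rw [lap, lap, Finset.mul_sum, ← Finset.sum_add_distrib]
  exact Finset.sum_le_sum fun z _ => by nlinarith [hP x z, h z]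

lemma monotone_add_smul_lap (hP : ∀ x y, 0 ≤ P x y) {ε : ℝ} (hε : 0 ≤ ε)
    (hεP : ∀ x, ε * ∑ z, P x z ≤ 1) :
    Monotone (fun g : V → ℝ => fun x => g x + ε * lap P g x) := by
  intro g h hgh x
  have hexpand : ∀ g : V → ℝ,
      g x + ε * lap P g x = (1 - ε * ∑ z, P x z) * g x + ε * ∑ z, P x z * g z := by
    intro g
    simp only [lap, mul_sub, Finset.sum_sub_distrib, ← Finset.sum_mul]
    ring
  simp only [hexpand]
  have h1 : 0 ≤ 1 - ε * ∑ z, P x z := by linarith [hεP x]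
  gcongr with z
  · exact hgh x
  · exact hP x z
  · exact hgh z

lemma lap_le_lap_of_eq_dist {f : V → ℝ} {ε : ℝ} (hε : 0 < ε)
    (hg : Lip1 d (fun z => f z + ε * lap P f z)) {x y : V} (h : f y - f x = d y x) :
    lap P f y ≤ lap P f x := by
  have := hg.sub_le y x
  exact le_of_mul_le_mul_left (by linarith) hε

/-- The tightening trick: raising `f` to `max f (f x + d(x,y) - d(·,y))` makes the edge tight
while moving `f` by at most the slack `d(x,y) - (f y - f x)`. -/
lemma NonnegOllivier.lap_sub_le (hcurv : NonnegOllivier P d) (hP : ∀ x y, 0 ≤ P x y)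
    (hd : IsPathDist P d) {f : V → ℝ} (hf : Lip1 d f) {x y : V} (hxy : x ≠ y)
    (hPxy : 0 < P x y) :
    lap P f y - lap P f x ≤ (∑ z, P x z + ∑ z, P y z) * (d x y - (f y - f x)) := by
  set slack := d x y - (f y - f x)
  set g : V → ℝ := fun z => max (f z) (f x + d x y - d z y)
  have hg : Lip1 d g := hf.max (lip1_const_sub_dist hd.symm hd.triangle _ y)
  have hslack : 0 ≤ slack := by linarith [hf.sub_le y x, hd.symm x y]
  have hgx : g x = f x := by simp [g]
  have hgy : g y = f x + d x y := by
    simp only [g, hd.dist_self, sub_zero]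
    exact max_eq_right (by linarith)
  have hfg : ∀ z, f z ≤ g z := fun z => le_max_left _ _
  have hgf : ∀ z, g z ≤ f z + slack := fun z =>
    max_le (by linarith) (by linarith [hf.sub_le y z, hd.symm y z])
  have hy := lap_le_lap_add hP (f := f) (g := g) (x := y) (a := slack)
    fun z => by linarith [hfg z]
  have hx := lap_le_lap_add hP (f := g) (g := f) (x := x) (a := slack)
    fun z => by linarith [hgf z]
  have htight := hcurv x y hPxy hxy g hg (by linarith)
  linarith

lemma NonnegOllivier.lip1_add_smul_lap (hcurv : NonnegOllivier P d) (hP : ∀ x y, 0 ≤ P x y)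
    (hd : IsPathDist P d) {ε : ℝ} (hε : 0 ≤ ε)
    (hεP : ∀ x y, ε * (∑ z, P x z + ∑ z, P y z) ≤ 1) {f : V → ℝ} (hf : Lip1 d f) :
    Lip1 d (fun z => f z + ε * lap P f z) := by
  refine hd.lip1_of_forall_edge fun x y hPxy => ?_
  rcases eq_or_ne x y with rfl | hxy
  · simp [hd.dist_self]
  have hslack : 0 ≤ d x y - (f y - f x) := by linarith [hf.sub_le y x, hd.symm x y]
  have hlap := mul_le_mul_of_nonneg_left (hcurv.lap_sub_le hP hd hf hxy hPxy) hε
  nlinarith [mul_le_mul_of_nonneg_right (hεP x y) hslack]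

lemma lap_indicator_neg (hP : ∀ x y, 0 ≤ P x y) {W : Set V} {x y : V} (hx : x ∈ W)
    (hy : y ∉ W) (hPxy : 0 < P x y) : lap P (W.indicator fun _ => (1 : ℝ)) x < 0 := by
  have hterm : ∀ z, P x z * (W.indicator (fun _ => (1 : ℝ)) z - 1) ≤ 0 := fun z =>
    mul_nonpos_of_nonneg_of_nonpos (hP x z) (by by_cases hz : z ∈ W <;> simp [hz])
  rw [lap, Set.indicator_of_mem hx]
  calc _ < ∑ _z : V, (0 : ℝ) :=
        Finset.sum_lt_sum (fun z _ => hterm z) ⟨y, Finset.mem_univ y, by simpa [hy] using hPxy⟩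
    _ = 0 := by simp

lemma exists_pos_mul_sum_le (P : V → V → ℝ) : ∃ ε > 0, ∀ x, ε * ∑ z, P x z ≤ 1 / 2 := by
  obtain ⟨M, hM⟩ := Finite.exists_le fun x => ∑ z, P x z
  refine ⟨1 / (2 * (|M| + 1)), by positivity, fun x => ?_⟩
  rw [div_mul_eq_mul_div, one_mul, div_le_div_iff₀ (by positivity) two_pos]
  linarith [hM x, le_abs_self M]

end Laplacian

section LipExt

variable {V : Type*}

noncomputable def lowerLipExt (d : V → V → ℝ) (K : Set V) (u : V → ℝ) (x : V) : ℝ :=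
  ⨆ k : K, u k - d k x

noncomputable def upperLipExt (d : V → V → ℝ) (K : Set V) (u : V → ℝ) (x : V) : ℝ :=
  ⨅ k : K, u k + d x k

open Classical in
noncomputable def splitLipExt (d : V → V → ℝ) (K W : Set V) (u : V → ℝ) : V → ℝ :=
  W.piecewise (lowerLipExt d K u) (upperLipExt d K u)

variable {d : V → V → ℝ} {K W : Set V} {u : V → ℝ}

lemma le_lowerLipExt [Finite K] (u : V → ℝ) {k : V} (hk : k ∈ K) (x : V) :
    u k - d k x ≤ lowerLipExt d K u x :=
  le_ciSup (f := fun k : K => u k - d k x) (Set.finite_range _).bddAbove ⟨k, hk⟩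

lemma upperLipExt_le [Finite K] (u : V → ℝ) {k : V} (hk : k ∈ K) (x : V) :
    upperLipExt d K u x ≤ u k + d x k :=
  ciInf_le (Set.finite_range _).bddBelow (⟨k, hk⟩ : K)

lemma lowerLipExt_le [Nonempty K] {x : V} {c : ℝ} (h : ∀ k ∈ K, u k - d k x ≤ c) :
    lowerLipExt d K u x ≤ c :=
  ciSup_le fun k => h k k.2

lemma le_upperLipExt [Nonempty K] {x : V} {c : ℝ} (h : ∀ k ∈ K, c ≤ u k + d x k) :
    c ≤ upperLipExt d K u x :=
  le_ciInf fun k => h k k.2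

lemma exists_lowerLipExt_eq [Finite K] [Nonempty K] (u : V → ℝ) (x : V) :
    ∃ k ∈ K, lowerLipExt d K u x = u k - d k x := by
  obtain ⟨k, hk⟩ := exists_eq_ciSup_of_finite (f := fun k : K => u k - d k x)
  exact ⟨k, k.2, hk.symm⟩

lemma exists_upperLipExt_eq [Finite K] [Nonempty K] (u : V → ℝ) (x : V) :
    ∃ k ∈ K, upperLipExt d K u x = u k + d x k := by
  obtain ⟨k, hk⟩ := exists_eq_ciInf_of_finite (f := fun k : K => u k + d x k)
  exact ⟨k, k.2, hk.symm⟩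

lemma lowerLipExt_add_const [Finite K] [Nonempty K] (u : V → ℝ) (c : ℝ) :
    lowerLipExt d K (fun z => u z + c) = fun x => lowerLipExt d K u x + c := by
  ext x
  rw [lowerLipExt, lowerLipExt, ciSup_add (Set.finite_range fun k : K => u k - d k x).bddAbove]
  simp only [add_sub_right_comm]

lemma upperLipExt_add_const [Finite K] [Nonempty K] (u : V → ℝ) (c : ℝ) :
    upperLipExt d K (fun z => u z + c) = fun x => upperLipExt d K u x + c := by
  ext x
  rw [upperLipExt, upperLipExt, ciInf_add (Set.finite_range fun k : K => u k + d x k).bddBelow]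
  simp only [add_right_comm]

lemma monotone_lowerLipExt [Finite K] [Nonempty K] : Monotone (lowerLipExt d K) :=
  fun _ _ huv x => lowerLipExt_le fun k hk =>
    (le_lowerLipExt _ hk x).trans' (by linarith [huv k])

lemma monotone_upperLipExt [Finite K] [Nonempty K] : Monotone (upperLipExt d K) :=
  fun _ _ huv x => le_upperLipExt fun k hk =>
    (upperLipExt_le _ hk x).trans (by linarith [huv k])

lemma lowerLipExt_eq_of_mem [Finite K] [Nonempty K] (hu : Lip1 d u) {k : V} (hk : k ∈ K)
    (hkk : d k k = 0) : lowerLipExt d K u k = u k :=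
  le_antisymm (lowerLipExt_le fun k' _ => by linarith [hu.sub_le k' k])
    (by simpa [hkk] using le_lowerLipExt (d := d) u hk k)

lemma upperLipExt_eq_of_mem [Finite K] [Nonempty K] (hu : Lip1 d u) {k : V} (hk : k ∈ K)
    (hkk : d k k = 0) : upperLipExt d K u k = u k :=
  le_antisymm (by simpa [hkk] using upperLipExt_le (d := d) u hk k)
    (le_upperLipExt fun k' _ => by linarith [hu.sub_le k k'])

lemma lowerLipExt_le_upperLipExt [Nonempty K] (htri : ∀ x y z, d x z ≤ d x y + d y z)
    (hu : Lip1 d u) (x : V) : lowerLipExt d K u x ≤ upperLipExt d K u x :=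
  lowerLipExt_le fun k _ => le_upperLipExt fun k' _ => by linarith [hu.sub_le k k', htri k x k']

lemma lip1_lowerLipExt [Finite K] [Nonempty K] (hsymm : ∀ x y, d x y = d y x)
    (htri : ∀ x y z, d x z ≤ d x y + d y z) (u : V → ℝ) : Lip1 d (lowerLipExt d K u) := by
  refine lip1_of_sub_le hsymm fun x y => ?_
  obtain ⟨k, hk, hx⟩ := exists_lowerLipExt_eq (d := d) (K := K) u x
  linarith [le_lowerLipExt (d := d) u hk y, htri k x y]

lemma lip1_upperLipExt [Finite K] [Nonempty K] (hsymm : ∀ x y, d x y = d y x)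
    (htri : ∀ x y z, d x z ≤ d x y + d y z) (u : V → ℝ) : Lip1 d (upperLipExt d K u) := by
  refine lip1_of_sub_le hsymm fun x y => ?_
  obtain ⟨k, hk, hy⟩ := exists_upperLipExt_eq (d := d) (K := K) u y
  linarith [upperLipExt_le (d := d) u hk x, htri x y k]

lemma monotone_splitLipExt [Finite K] [Nonempty K] : Monotone (splitLipExt d K W) :=
  fun _ _ huv => by
    classical
    exact Set.piecewise_mono (fun x _ => monotone_lowerLipExt huv x)
      (fun x _ => monotone_upperLipExt huv x)

lemma splitLipExt_add_const [Finite K] [Nonempty K] (u : V → ℝ) (c : ℝ) :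
    splitLipExt d K W (fun z => u z + c) = fun x => splitLipExt d K W u x + c := by
  classical
  ext x
  by_cases hx : x ∈ W <;>
    simp [splitLipExt, hx, lowerLipExt_add_const, upperLipExt_add_const]

lemma splitLipExt_eq_of_mem [Finite K] [Nonempty K] (hu : Lip1 d u) {k : V} (hk : k ∈ K)
    (hkk : d k k = 0) : splitLipExt d K W u k = u k := by
  classical
  by_cases hkW : k ∈ W <;>
    simp [splitLipExt, hkW, lowerLipExt_eq_of_mem hu hk hkk, upperLipExt_eq_of_mem hu hk hkk]

lemma exists_splitLipExt_eq_sub [Finite K] [Nonempty K] (hu : Lip1 d u)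
    (hrefl : ∀ x, d x x = 0) {x : V} (hx : x ∈ W) :
    ∃ k ∈ K, splitLipExt d K W u x = splitLipExt d K W u k - d k x := by
  classical
  obtain ⟨k, hk, hxk⟩ := exists_lowerLipExt_eq (d := d) (K := K) u x
  refine ⟨k, hk, ?_⟩
  rw [splitLipExt_eq_of_mem hu hk (hrefl k), splitLipExt, Set.piecewise_eq_of_mem _ _ _ hx, hxk]

lemma exists_splitLipExt_eq_add [Finite K] [Nonempty K] (hu : Lip1 d u)
    (hrefl : ∀ x, d x x = 0) {x : V} (hx : x ∉ W) :
    ∃ k ∈ K, splitLipExt d K W u x = splitLipExt d K W u k + d x k := by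
  classical
  obtain ⟨k, hk, hxk⟩ := exists_upperLipExt_eq (d := d) (K := K) u x
  refine ⟨k, hk, ?_⟩
  rw [splitLipExt_eq_of_mem hu hk (hrefl k), splitLipExt, Set.piecewise_eq_of_notMem _ _ _ hx,
    hxk]

lemma lip1_splitLipExt [Finite K] [Nonempty K] {P : V → V → ℝ} (hd : IsPathDist P d)
    (hK : ∀ x y, x ∈ W → y ∉ W → 0 < P x y → x ∈ K) (hu : Lip1 d u) :
    Lip1 d (splitLipExt d K W u) := by
  classical
  have hlow := lip1_lowerLipExt (K := K) hd.symm hd.triangle u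
  have hup := lip1_upperLipExt (K := K) hd.symm hd.triangle u
  have hle := lowerLipExt_le_upperLipExt (K := K) hd.triangle hu
  refine hd.lip1_of_forall_edge fun x y hPxy => ?_
  simp only [splitLipExt, Set.piecewise]
  split_ifs with hy hx hx
  · exact hlow.sub_le y x |>.trans_eq (hd.symm y x)
  · linarith [hle y, hup.sub_le y x, hd.symm y x]
  · have hxK := hK x y hx hy hPxy
    rw [lowerLipExt_eq_of_mem hu hxK (hd.dist_self x),
      ← upperLipExt_eq_of_mem hu hxK (hd.dist_self x)]
    exact hup.sub_le y x |>.trans_eq (hd.symm y x)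
  · exact hup.sub_le y x |>.trans_eq (hd.symm y x)

end LipExt

section AdditiveEigenvector

open Filter Topology

variable {ι : Type*} [Fintype ι] {d : ι → ι → ℝ} {S : (ι → ℝ) → ι → ℝ}

lemma Monotone.lipschitzWith_one_of_map_add_const (hS : Monotone S)
    (hSc : ∀ u c, S (fun x => u x + c) = fun x => S u x + c) : LipschitzWith 1 S := by
  have hclose : ∀ u v : ι → ℝ, S u ≤ fun x => S v x + dist u v := fun u v => by
    rw [← hSc]
    refine hS fun y => ?_
    have := dist_le_pi_dist u v y
    rw [Real.dist_eq] at this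
    linarith [le_abs_self (u y - v y)]
  refine LipschitzWith.of_dist_le_mul fun u v => ?_
  rw [NNReal.coe_one, one_mul, dist_pi_le_iff dist_nonneg]
  intro x
  rw [Real.dist_eq, abs_sub_le_iff]
  constructor
  · linarith [hclose u v x]
  · linarith [hclose v u x, dist_comm u v]

lemma exists_lip1_smul_map_eq (hd : ∀ x y, 0 ≤ d x y) (hS : LipschitzWith 1 S)
    (hSd : ∀ u, Lip1 d u → Lip1 d (S u)) {s : ℝ} (hs0 : 0 ≤ s) (hs1 : s < 1) :
    ∃ u, Lip1 d u ∧ s • S u = u := by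
  have hT : ContractingWith (⟨s, hs0⟩ : NNReal) (fun u => s • S u) := by
    refine ⟨hs1, LipschitzWith.of_dist_le_mul fun u v => ?_⟩
    rw [dist_smul₀, Real.norm_of_nonneg hs0]
    exact mul_le_mul_of_nonneg_left (by simpa using hS.dist_le_mul u v) hs0
  have hmaps : Set.MapsTo (fun u => s • S u) {u | Lip1 d u} {u | Lip1 d u} :=
    fun u hu => (hSd u hu).smul hs0 hs1.le
  refine ⟨hT.fixedPoint, ?_, hT.fixedPoint_isFixedPt⟩
  exact isClosed_setOf_lip1.mem_of_tendsto (hT.tendsto_iterate_fixedPoint 0)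
    (Eventually.of_forall fun n => hmaps.iterate n (lip1_const hd 0))

theorem exists_lip1_map_eq_add_const [Nonempty ι] (hd : ∀ x y, 0 ≤ d x y) (hS : Monotone S)
    (hSc : ∀ u c, S (fun x => u x + c) = fun x => S u x + c)
    (hSd : ∀ u, Lip1 d u → Lip1 d (S u)) : ∃ u, Lip1 d u ∧ ∃ γ, ∀ x, S u x = u x + γ := by
  have hSlip := hS.lipschitzWith_one_of_map_add_const hSc
  obtain ⟨x₀⟩ := ‹Nonempty ι›
  set s : ℕ → ℝ := fun n => n / (n + 1)
  have hs1 : ∀ n, s n < 1 := fun n => (div_lt_one (by positivity)).2 (by linarith)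
  choose u hu hfix using fun n => exists_lip1_smul_map_eq hd hSlip hSd (by positivity) (hs1 n)
  set v : ℕ → ι → ℝ := fun n x => u n x + -u n x₀
  have hv : ∀ n, Lip1 d (v n) := fun n => (hu n).add_const _
  have hvconst : ∀ n x, v n x - s n * S (v n) x = (s n - 1) * u n x₀ := by
    intro n x
    have hfixx := congrFun (hfix n) x
    simp only [Pi.smul_apply, smul_eq_mul] at hfixx
    simp only [v, hSc]
    linarith
  obtain ⟨B, hB⟩ := Finite.exists_le fun x => d x x₀
  have hbdd : Bornology.IsBounded (Set.range v) := by
    refine isBounded_iff_forall_norm_le.2 ⟨B, ?_⟩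
    rintro _ ⟨n, rfl⟩
    refine (pi_norm_le_iff_of_nonneg ((hd x₀ x₀).trans (hB x₀))).2 fun x => ?_
    rw [Real.norm_eq_abs]
    exact (by simpa [v, ← sub_eq_add_neg] using hu n x x₀ : |v n x| ≤ d x x₀).trans (hB x)
  obtain ⟨w, -, φ, hφ, hlim⟩ := tendsto_subseq_of_bounded hbdd fun n => Set.mem_range_self n
  have hw : Lip1 d w :=
    isClosed_setOf_lip1.mem_of_tendsto hlim (Eventually.of_forall fun n => hv (φ n))
  have hs : Tendsto (s ∘ φ) atTop (𝓝 1) :=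
    (tendsto_natCast_div_add_atTop 1).comp hφ.tendsto_atTop
  have hSw := (hSlip.continuous.tendsto w).comp hlim
  have hD : ∀ x, Tendsto (fun n => v (φ n) x - s (φ n) * S (v (φ n)) x) atTop
      (𝓝 (w x - S w x)) := fun x => by
    simpa using (tendsto_pi_nhds.1 hlim x).sub (hs.mul (tendsto_pi_nhds.1 hSw x))
  refine ⟨w, hw, S w x₀ - w x₀, fun x => ?_⟩
  have := tendsto_nhds_unique (hD x) ((hD x₀).congr fun n => by rw [hvconst, hvconst])
  linarith

end AdditiveEigenvector

section Separation

variable {V : Type*} [Fintype V] {P d : V → V → ℝ}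

theorem NonnegOllivier.exists_separating_function (hcurv : NonnegOllivier P d)
    (hP : ∀ x y, 0 ≤ P x y) (hd : IsPathDist P d) {K W : Set V} [Nonempty K]
    (hK : ∀ x y, x ∈ W → y ∉ W → 0 < P x y → x ∈ K) :
    ∃ f : V → ℝ, ∃ ε > 0, ∃ C, Lip1 d f ∧ Lip1 d (fun z => f z + ε * lap P f z) ∧
      (∀ k ∈ K, lap P f k = C) ∧ (∀ x ∈ W, ∃ k ∈ K, f x = f k - d k x) ∧
      (∀ x ∉ W, ∃ k ∈ K, f x = f k + d x k) := by
  obtain ⟨ε, hε, hεP⟩ := exists_pos_mul_sum_le P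
  have hεP₂ : ∀ x y, ε * (∑ z, P x z + ∑ z, P y z) ≤ 1 := fun x y => by
    rw [mul_add]
    linarith [hεP x, hεP y]
  have : Nonempty V := ‹Nonempty K›.map Subtype.val
  have hlip : ∀ u, Lip1 d u → Lip1 d (splitLipExt d K W u) := fun u hu =>
    lip1_splitLipExt hd hK hu
  obtain ⟨u, hu, γ, hγ⟩ := exists_lip1_map_eq_add_const
    (S := fun u x => splitLipExt d K W u x + ε * lap P (splitLipExt d K W u) x) hd.nonneg
    ((monotone_add_smul_lap hP hε.le fun x => by linarith [hεP x]).comp monotone_splitLipExt)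
    (fun u c => by
      ext x
      simp only [splitLipExt_add_const, lap_add_const]
      ring)
    (fun u hu => hcurv.lip1_add_smul_lap hP hd hε.le hεP₂ (hlip u hu))
  refine ⟨splitLipExt d K W u, ε, hε, γ / ε, hlip u hu,
    hcurv.lip1_add_smul_lap hP hd hε.le hεP₂ (hlip u hu), fun k hk => ?_,
    fun x hx => exists_splitLipExt_eq_sub hu hd.dist_self hx,
    fun x hx => exists_splitLipExt_eq_add hu hd.dist_self hx⟩
  have hγk := hγ k
  rw [splitLipExt_eq_of_mem hu hk (hd.dist_self k)] at hγk
  rw [eq_div_iff hε.ne']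
  linarith

end Separation

theorem laplacian_separation_general {V : Type*} [Fintype V] (P d : V → V → ℝ)
    (hP : ∀ x y, 0 ≤ P x y)
    (hd : IsPathDist P d)
    (hcurv : NonnegOllivier P d)
    (W : Set V) :
    ∀ K : Set V, K = {x ∈ W | lap P (Set.indicator W (fun _ => (1 : ℝ))) x ≠ 0} →
    ∃ f : V → ℝ, ∃ C : ℝ, Lip1 d f ∧
      (∀ x ∈ K, lap P f x = C) ∧
      (∀ x ∈ W \ K, f x =
        sInf {v | ∃ g : V → ℝ, Lip1 d g ∧ (∀ k ∈ K, g k = f k) ∧ v = g x}) ∧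
      (∀ x ∈ Set.univ \ W, f x =
        sSup {v | ∃ g : V → ℝ, Lip1 d g ∧ (∀ k ∈ K, g k = f k) ∧ v = g x}) ∧
      (∀ x ∈ W \ K, C ≤ lap P f x) ∧
      (∀ x ∈ Set.univ \ W, lap P f x ≤ C) := by
  intro K hK
  rcases K.eq_empty_or_nonempty with rfl | ⟨k₀, hk₀⟩
  · -- with `K = ∅` both sets of extension values are unbounded, so `sInf` and `sSup` are `0`
    refine ⟨0, 0, lip1_const hd.nonneg 0, by simp, fun x _ => ?_, fun x _ => ?_,
      fun x _ => by simp [lap], fun x _ => by simp [lap]⟩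
    · exact (Real.sInf_of_not_bddBelow (not_bddBelow_lip1_extensions_empty hd.nonneg _ x)).symm
    · exact (Real.sSup_of_not_bddAbove (not_bddAbove_lip1_extensions_empty hd.nonneg _ x)).symm
  have : Nonempty K := ⟨⟨k₀, hk₀⟩⟩
  have hKedge : ∀ x y, x ∈ W → y ∉ W → 0 < P x y → x ∈ K := fun x y hx hy hPxy =>
    hK ▸ ⟨hx, (lap_indicator_neg hP hx hy hPxy).ne⟩
  obtain ⟨f, ε, hε, C, hf, hfε, hfK, hX, hY⟩ :=
    hcurv.exists_separating_function hP hd hKedge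
  refine ⟨f, C, hf, hfK, fun x hx => ?_, fun x hx => ?_, fun x hx => ?_, fun x hx => ?_⟩
  · obtain ⟨k, hk, hfx⟩ := hX x hx.1
    exact (isLeast_lip1_extensions hf hk hfx).csInf_eq.symm
  · obtain ⟨k, hk, hfx⟩ := hY x hx.2
    exact (isGreatest_lip1_extensions hf hk hfx).csSup_eq.symm
  · obtain ⟨k, hk, hfx⟩ := hX x hx.1
    exact hfK k hk ▸ lap_le_lap_of_eq_dist hε hfε (by linarith)
  · obtain ⟨k, hk, hfx⟩ := hY x hx.2
    exact hfK k hk ▸ lap_le_lap_of_eq_dist hε hfε (by linarith)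

/-- Laplacian separation principle applied to `W`: there is `f ∈ Lip(1)` and a constant
`C` with `Δf = C` on the inner vertex boundary `K = supp(Δ1_W) ∩ W`, `f` the minimal
1-Lipschitz extension of `f|_K` on `W∖K`, the maximal one on `V∖W`, and moreover
`Δf ≥ C` on `W∖K` and `Δf ≤ C` on `V∖W`. -/
theorem laplacian_separation {V : Type*} [Fintype V] (P d : V → V → ℝ) (m : V → ℝ)
    (hP : ∀ x y, 0 ≤ P x y) (hm : ∀ x, 0 < m x)
    (hrev : ∀ x y, m x * P x y = m y * P y x)
    (hd : IsPathDist P d)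
    (hcurv : NonnegOllivier P d)
    (W : Set V) :
    ∀ K : Set V, K = {x ∈ W | lap P (Set.indicator W (fun _ => (1 : ℝ))) x ≠ 0} →
    ∃ f : V → ℝ, ∃ C : ℝ, Lip1 d f ∧
      (∀ x ∈ K, lap P f x = C) ∧
      (∀ x ∈ W \ K, f x =
        sInf {v | ∃ g : V → ℝ, Lip1 d g ∧ (∀ k ∈ K, g k = f k) ∧ v = g x}) ∧
      (∀ x ∈ Set.univ \ W, f x =
        sSup {v | ∃ g : V → ℝ, Lip1 d g ∧ (∀ k ∈ K, g k = f k) ∧ v = g x}) ∧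
      (∀ x ∈ W \ K, C ≤ lap P f x) ∧
      (∀ x ∈ Set.univ \ W, lap P f x ≤ C) :=
  laplacian_separation_general P d hP hd hcurv W
end
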